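/- arXiv:2203.07811 — 9 statements merged into one kernel-verified Lean document; each statement's English description precedes it below -/
import Mathlib

section
/- Let A be an n×n complex matrix, u, v ∈ ℂⁿ, τ₀ ∈ ℂ nonzero, and let λ₀ ∈ ℂ not be an eigenvalue of A. Define Q(λ) = v*(λIₙ − A)⁻¹u. Then λ₀ is an eigenvalue of B(τ₀) = A + τ₀ u v* of algebraic multiplicity κ ≥ 1 (i.e., λ₀ is a root of the characteristic polynomial of B(τ₀) of multiplicity exactly κ) if and only if τ₀Q(λ₀) = 1, Q′(λ₀) = 0, …, Q^{(κ−1)}(λ₀) = 0, and Q^{(κ)}(λ₀) ≠ 0. -/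
/-!
By the matrix determinant lemma, `det (λ - B(τ)) = det (λ - A) * (1 - τ Q(λ))` off the spectrum
of `A`. Near `λ₀` the first factor is analytic and nonvanishing, so the multiplicity of `λ₀` as a
root of the characteristic polynomial of `B(τ)` is the order of vanishing of `1 - τ Q` at `λ₀`,
which is read off from the Taylor coefficients of `Q`.
-/

open Matrix Polynomial Filter Topology

theorem Matrix.eval_charpoly_add_smul_vecMulVec {R : Type*} [CommRing R] {m : Type*} [Fintype m]
    [DecidableEq m] (A : Matrix m m R) (u w : m → R) (τ z : R) (hz : z ∉ spectrum R A) :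
    (A + τ • vecMulVec u w).charpoly.eval z =
      A.charpoly.eval z * (1 - τ * (w ⬝ᵥ (z • (1 : Matrix m m R) - A)⁻¹ *ᵥ u)) := by
  have hunit : IsUnit (z • (1 : Matrix m m R) - A).det := by
    simpa [mem_spectrum_iff_not_isUnit_eval_charpoly, eval_charpoly, smul_one_eq_diagonal] using hz
  have hsplit : z • (1 : Matrix m m R) - (A + τ • vecMulVec u w) =
      (z • 1 - A) + replicateCol Unit (-τ • u) * replicateRow Unit w := by
    rw [← vecMulVec_eq, smul_vecMulVec, neg_smul, ← sub_eq_add_neg, sub_sub]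
  rw [eval_charpoly, eval_charpoly, scalar_apply, ← smul_one_eq_diagonal, hsplit,
    det_add_replicateCol_mul_replicateRow hunit, det_unique (n := Unit)]
  rw [add_apply, one_apply_eq, Matrix.mul_assoc, ← replicateCol_mulVec,
    replicateRow_mul_replicateCol_apply, mulVec_smul, dotProduct_smul, neg_smul, smul_eq_mul]
  ring

section

variable {𝕜 : Type*} [NontriviallyNormedField 𝕜]

theorem Polynomial.analyticOrderAt_eval_eq_rootMultiplicity {p : 𝕜[X]} (hp : p ≠ 0) (x : 𝕜) :
    analyticOrderAt (eval · p) x = p.rootMultiplicity x := by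
  rw [(AnalyticOnNhd.eval_polynomial p x (Set.mem_univ x)).analyticOrderAt_eq_natCast]
  refine ⟨(eval · (p /ₘ (X - C x) ^ p.rootMultiplicity x)),
    AnalyticOnNhd.eval_polynomial _ x (Set.mem_univ x),
    eval_divByMonic_pow_rootMultiplicity_ne_zero x hp, .of_forall fun z => ?_⟩
  conv_lhs => rw [← pow_mul_divByMonic_rootMultiplicity_eq p x]
  simp

theorem analyticOrderAt_one_sub_mul_eq_natCast_iff [CharZero 𝕜] [CompleteSpace 𝕜]
    {q : 𝕜 → 𝕜} {x τ : 𝕜} (hq : AnalyticAt 𝕜 q x) {κ : ℕ} (hκ : 1 ≤ κ) :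
    analyticOrderAt (fun z => 1 - τ * q z) x = κ ↔
      τ * q x = 1 ∧ (∀ j, 1 ≤ j → j < κ → iteratedDeriv j q x = 0) ∧
        iteratedDeriv κ q x ≠ 0 := by
  have hderiv : ∀ j, 1 ≤ j →
      iteratedDeriv j (fun z => 1 - τ * q z) x = -(τ * iteratedDeriv j q x) :=
    fun j hj => by simp [iteratedDeriv_const_sub hj]
  have hτ : τ * q x = 1 → τ ≠ 0 := by rintro h rfl; simp at h
  rw [analyticOrderAt_eq_nat_iff_iteratedDeriv_eq_zero (by fun_prop)]
  constructor
  · rintro ⟨hvanish, hne⟩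
    have hval : τ * q x = 1 := by
      have h0 : 1 - τ * q x = 0 := by simpa using hvanish 0 (by omega)
      linear_combination -h0
    refine ⟨hval, fun j hj hjκ => ?_, fun h => hne (by simp [hderiv κ hκ, h])⟩
    simpa [hderiv j hj, hτ hval] using hvanish j hjκ
  · rintro ⟨hval, hvanish, hne⟩
    refine ⟨fun j hj => ?_, by simp [hderiv κ hκ, hτ hval, hne]⟩
    rcases j.eq_zero_or_pos with rfl | hj0
    · simp [hval]
    · simp [hderiv j hj0, hvanish j hj0 hj]

variable {m : Type*} [Fintype m] [DecidableEq m]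

theorem Matrix.isClosed_spectrum (A : Matrix m m 𝕜) : IsClosed (spectrum 𝕜 A) := by
  have hroots : spectrum 𝕜 A = {z | A.charpoly.eval z = 0} :=
    Set.ext fun _ => mem_spectrum_iff_isRoot_charpoly
  rw [hroots]
  exact isClosed_eq (Polynomial.continuous _) continuous_const

/-- The determinant identity at `τ = 1` exhibits `w ⬝ᵥ (z - A)⁻¹ u` as a rational function of `z`
whose denominator `det (z - A)` is nonzero off the spectrum. -/
theorem Matrix.analyticAt_dotProduct_resolvent_mulVec (A : Matrix m m 𝕜) (u w : m → 𝕜) {z₀ : 𝕜}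
    (hz₀ : z₀ ∉ spectrum 𝕜 A) :
    AnalyticAt 𝕜 (fun z => w ⬝ᵥ (z • (1 : Matrix m m 𝕜) - A)⁻¹ *ᵥ u) z₀ := by
  have hG : A.charpoly.eval z₀ ≠ 0 := by rwa [mem_spectrum_iff_isRoot_charpoly] at hz₀
  have hratio : AnalyticAt 𝕜
      (fun z => 1 - (A + (1 : 𝕜) • vecMulVec u w).charpoly.eval z / A.charpoly.eval z) z₀ :=
    analyticAt_const.sub ((AnalyticOnNhd.eval_polynomial _ z₀ (Set.mem_univ _)).div
      (AnalyticOnNhd.eval_polynomial _ z₀ (Set.mem_univ _)) hG)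
  refine hratio.congr ?_
  filter_upwards [(isClosed_spectrum A).isOpen_compl.mem_nhds hz₀] with z hz
  have hGz : A.charpoly.eval z ≠ 0 := by
    rwa [Set.mem_compl_iff, mem_spectrum_iff_isRoot_charpoly] at hz
  rw [eval_charpoly_add_smul_vecMulVec A u w 1 z hz]
  field_simp
  ring

theorem Matrix.rootMultiplicity_charpoly_add_smul_vecMulVec (A : Matrix m m 𝕜) (u w : m → 𝕜)
    (τ : 𝕜) {z₀ : 𝕜} (hz₀ : z₀ ∉ spectrum 𝕜 A) :
    ((A + τ • vecMulVec u w).charpoly.rootMultiplicity z₀ : ℕ∞) =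
      analyticOrderAt (fun z => 1 - τ * (w ⬝ᵥ (z • (1 : Matrix m m 𝕜) - A)⁻¹ *ᵥ u)) z₀ := by
  have hG : A.charpoly.eval z₀ ≠ 0 := by rwa [mem_spectrum_iff_isRoot_charpoly] at hz₀
  have hGan : AnalyticAt 𝕜 (eval · A.charpoly) z₀ :=
    AnalyticOnNhd.eval_polynomial _ z₀ (Set.mem_univ _)
  have hq := analyticAt_dotProduct_resolvent_mulVec A u w hz₀
  rw [← Polynomial.analyticOrderAt_eval_eq_rootMultiplicity (charpoly_monic _).ne_zero]
  calc analyticOrderAt (eval · (A + τ • vecMulVec u w).charpoly) z₀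
      = analyticOrderAt ((eval · A.charpoly) *
          fun z => 1 - τ * (w ⬝ᵥ (z • (1 : Matrix m m 𝕜) - A)⁻¹ *ᵥ u)) z₀ := by
        refine analyticOrderAt_congr ?_
        filter_upwards [(isClosed_spectrum A).isOpen_compl.mem_nhds hz₀] with z hz
        exact eval_charpoly_add_smul_vecMulVec A u w τ z hz
    _ = analyticOrderAt (fun z => 1 - τ * (w ⬝ᵥ (z • (1 : Matrix m m 𝕜) - A)⁻¹ *ᵥ u)) z₀ := by
        rw [analyticOrderAt_mul hGan (by fun_prop), hGan.analyticOrderAt_eq_zero.mpr hG, zero_add]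

end

theorem stmt2_general {n : ℕ} (A : Matrix (Fin n) (Fin n) ℂ) (u v : Fin n → ℂ) (τ₀ : ℂ)
    (lam₀ : ℂ) (hlam : lam₀ ∉ spectrum ℂ A) (κ : ℕ) (hκ : 1 ≤ κ) :
    (A + τ₀ • vecMulVec u (star v)).charpoly.rootMultiplicity lam₀ = κ ↔
      (τ₀ * (star v ⬝ᵥ (lam₀ • (1 : Matrix (Fin n) (Fin n) ℂ) - A)⁻¹.mulVec u) = 1 ∧
       (∀ j, 1 ≤ j → j < κ →
         iteratedDeriv j
           (fun z : ℂ => star v ⬝ᵥ (z • (1 : Matrix (Fin n) (Fin n) ℂ) - A)⁻¹.mulVec u) lam₀ = 0) ∧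
       iteratedDeriv κ
         (fun z : ℂ => star v ⬝ᵥ (z • (1 : Matrix (Fin n) (Fin n) ℂ) - A)⁻¹.mulVec u) lam₀ ≠ 0) := by
  rw [← Nat.cast_inj (R := ℕ∞), rootMultiplicity_charpoly_add_smul_vecMulVec A u (star v) τ₀ hlam]
  exact analyticOrderAt_one_sub_mul_eq_natCast_iff
    (analyticAt_dotProduct_resolvent_mulVec A u (star v) hlam) hκ

theorem stmt2 {n : ℕ} (A : Matrix (Fin n) (Fin n) ℂ) (u v : Fin n → ℂ) (τ₀ : ℂ)
    (hτ : τ₀ ≠ 0) (lam₀ : ℂ) (hlam : lam₀ ∉ spectrum ℂ A) (κ : ℕ) (hκ : 1 ≤ κ) :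
    (A + τ₀ • vecMulVec u (star v)).charpoly.rootMultiplicity lam₀ = κ ↔
      (τ₀ * (star v ⬝ᵥ (lam₀ • (1 : Matrix (Fin n) (Fin n) ℂ) - A)⁻¹.mulVec u) = 1 ∧
       (∀ j, 1 ≤ j → j < κ →
         iteratedDeriv j
           (fun z : ℂ => star v ⬝ᵥ (z • (1 : Matrix (Fin n) (Fin n) ℂ) - A)⁻¹.mulVec u) lam₀ = 0) ∧
       iteratedDeriv κ
         (fun z : ℂ => star v ⬝ᵥ (z • (1 : Matrix (Fin n) (Fin n) ℂ) - A)⁻¹.mulVec u) lam₀ ≠ 0) :=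
  stmt2_general A u v τ₀ lam₀ hlam κ hκ
end

section
/- Let A be an n×n complex matrix, u, v ∈ ℂⁿ, τ₀ ∈ ℂ, and let λ₀ ∈ ℂ be an eigenvalue of B(τ₀) = A + τ₀ u v* that is not an eigenvalue of A. Then λ₀ has geometric multiplicity one as an eigenvalue of B(τ₀), i.e., the kernel of λ₀Iₙ − B(τ₀) is one-dimensional. -/
open Matrix

lemma vecMulVec_mulVec' {n : ℕ} (u w x : Fin n → ℂ) :
    vecMulVec u w *ᵥ x = (w ⬝ᵥ x) • u := by
  funext i
  simp [vecMulVec, mulVec, dotProduct, Finset.sum_mul, Finset.mul_sum]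
  ring_nf

theorem stmt3 {n : ℕ} (A : Matrix (Fin n) (Fin n) ℂ) (u v : Fin n → ℂ) (τ₀ : ℂ) (lam₀ : ℂ)
    (hB : lam₀ ∈ spectrum ℂ (A + τ₀ • vecMulVec u (star v)))
    (hA : lam₀ ∉ spectrum ℂ A) :
    Module.finrank ℂ
      (LinearMap.ker
        (Matrix.mulVecLin
          (lam₀ • (1 : Matrix (Fin n) (Fin n) ℂ) - (A + τ₀ • vecMulVec u (star v))))) = 1 := by
  set B : Matrix (Fin n) (Fin n) ℂ := A + τ₀ • vecMulVec u (star v) with hBdef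
  set M : Matrix (Fin n) (Fin n) ℂ := lam₀ • 1 - B with hM
  set N : Matrix (Fin n) (Fin n) ℂ := lam₀ • 1 - A with hNdef
  have hNunit : IsUnit N := by
    rw [spectrum.mem_iff, not_not] at hA
    simpa [Algebra.algebraMap_eq_smul_one] using hA
  have hMnotunit : ¬ IsUnit M := by
    rw [spectrum.mem_iff] at hB
    simpa [Algebra.algebraMap_eq_smul_one] using hB
  have hNdet : IsUnit N.det := (Matrix.isUnit_iff_isUnit_det N).mp hNunit
  have hinv : N⁻¹ * N = 1 := Matrix.nonsing_inv_mul N hNdet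
  -- lower bound: kernel nontrivial
  have hdetM : M.det = 0 := by
    by_contra h
    exact hMnotunit ((Matrix.isUnit_iff_isUnit_det M).mpr (isUnit_iff_ne_zero.mpr h))
  obtain ⟨x, hx0, hxker⟩ := (Matrix.exists_mulVec_eq_zero_iff).mpr hdetM
  -- upper bound: kernel ≤ span of w
  set w : Fin n → ℂ := N⁻¹ *ᵥ u with hw
  have hker_le : LinearMap.ker M.mulVecLin ≤ Submodule.span ℂ {w} := by
    intro y hy
    have hy' : M *ᵥ y = 0 := hy
    have hNy : N *ᵥ y = (τ₀ * (star v ⬝ᵥ y)) • u := by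
      have : M *ᵥ y = N *ᵥ y - (τ₀ * (star v ⬝ᵥ y)) • u := by
        rw [hM, hNdef, hBdef]
        simp [Matrix.sub_mulVec, Matrix.add_mulVec, Matrix.smul_mulVec,
          vecMulVec_mulVec', smul_smul]
        abel
      rw [this] at hy'
      exact sub_eq_zero.mp hy'
    have : y = (τ₀ * (star v ⬝ᵥ y)) • w := by
      have := congrArg (fun z => N⁻¹ *ᵥ z) hNy
      simpa [Matrix.mulVec_mulVec, hinv, Matrix.mulVec_smul] using this
    rw [this]
    exact Submodule.smul_mem _ _ (Submodule.mem_span_singleton_self w)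
  have hub : Module.finrank ℂ (LinearMap.ker M.mulVecLin) ≤ 1 := by
    calc Module.finrank ℂ (LinearMap.ker M.mulVecLin)
        ≤ Module.finrank ℂ (Submodule.span ℂ {w}) := Submodule.finrank_mono hker_le
      _ ≤ 1 := by
          simpa using finrank_span_le_card ({w} : Set (Fin n → ℂ))
  have hlb : 0 < Module.finrank ℂ (LinearMap.ker M.mulVecLin) := by
    rw [Module.finrank_pos_iff]
    exact ⟨⟨⟨x, hxker⟩, 0, fun h => hx0 (by simpa using congrArg Subtype.val h)⟩⟩
  omega
end

section
/- Let A be an n×n complex matrix, u, v ∈ ℂⁿ, let m_A denote the minimal polynomial of A of degree l, and suppose v*u = v*Au = ⋯ = v*A^{l−1}u = 0. Then for every τ ∈ ℂ the characteristic polynomial of A + τ u v* equals the characteristic polynomial of A; in particular the spectrum of A + τ u v* (with algebraic multiplicities) equals that of A for every τ ∈ ℂ. -/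
/-!
Dividing by `m_A` turns the hypothesis into `v* p(A) u = 0` for every polynomial `p`. Off the
spectrum, Cayley–Hamilton makes the resolvent `(x - A)⁻¹` a polynomial in `A`, so the matrix
determinant lemma gives `det (x - A - τ u v*) = det (x - A) (1 - τ v* (x - A)⁻¹ u) = det (x - A)`.
The two characteristic polynomials thus agree at infinitely many points.
-/

open Matrix Polynomial

theorem LinearMap.map_aeval_eq_zero_of_map_pow_eq_zero {K S M : Type*} [Field K] [Ring S]
    [Algebra K S] [AddCommGroup M] [Module K M] {x : S} (hx : IsIntegral K x) (f : S →ₗ[K] M)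
    (h : ∀ j < (minpoly K x).natDegree, f (x ^ j) = 0) (p : K[X]) : f (aeval x p) = 0 := by
  nontriviality S
  rw [← aeval_modByMonic_eq_self_of_root (minpoly.aeval K x),
    aeval_eq_sum_range' (natDegree_modByMonic_lt p (minpoly.monic hx) (minpoly.ne_one K x)),
    map_sum]
  exact Finset.sum_eq_zero fun j hj => by rw [map_smul, h j (Finset.mem_range.mp hj), smul_zero]

namespace Matrix

variable {K ι : Type*} [Field K] [Fintype ι] [DecidableEq ι]

theorem dotProduct_aeval_mulVec_eq_zero {A : Matrix ι ι K} {u w : ι → K}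
    (h : ∀ j < (minpoly K A).natDegree, w ⬝ᵥ (A ^ j) *ᵥ u = 0) (p : K[X]) :
    w ⬝ᵥ aeval A p *ᵥ u = 0 :=
  LinearMap.map_aeval_eq_zero_of_map_pow_eq_zero (Algebra.IsIntegral.isIntegral A)
    { toFun := fun M => w ⬝ᵥ M *ᵥ u
      map_add' := fun M N => by rw [add_mulVec, dotProduct_add]
      map_smul' := fun c M => by rw [smul_mulVec, dotProduct_smul]; rfl } h p

/-- For singular `B` this holds with `q = 0`, since then `B⁻¹ = 0`. -/
theorem exists_aeval_eq_nonsing_inv (B : Matrix ι ι K) : ∃ q : K[X], aeval B q = B⁻¹ := by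
  by_cases hB : IsUnit B.det
  · have hc : B.charpoly.coeff 0 ≠ 0 := fun hc =>
      hB.ne_zero (by rw [det_eq_sign_charpoly_coeff, hc, mul_zero])
    refine ⟨-C (B.charpoly.coeff 0)⁻¹ * B.charpoly.divX, (inv_eq_right_inv ?_).symm⟩
    have hCH : B * aeval B B.charpoly.divX + algebraMap K _ (B.charpoly.coeff 0) = 0 := by
      have := congrArg (aeval B) (X_mul_divX_add B.charpoly)
      rwa [map_add, map_mul, aeval_X, aeval_C, aeval_self_charpoly] at this
    rw [map_mul, map_neg, aeval_C, neg_mul, mul_neg, Algebra.left_comm,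
      eq_neg_of_add_eq_zero_left hCH, mul_neg, neg_neg, ← map_mul, inv_mul_cancel₀ hc, map_one]
  · exact ⟨0, by rw [map_zero, nonsing_inv_apply_not_isUnit B hB]⟩

theorem det_add_vecMulVec {R : Type*} [CommRing R] {A : Matrix ι ι R} (hA : IsUnit A.det)
    (u v : ι → R) : (A + vecMulVec u v).det = A.det * (1 + v ⬝ᵥ A⁻¹ *ᵥ u) := by
  rw [vecMulVec_eq Unit, det_add_replicateCol_mul_replicateRow hA, Matrix.mul_assoc,
    ← replicateCol_mulVec, det_unique (n := Unit), add_apply, one_apply_eq,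
    replicateRow_mul_replicateCol_apply]

theorem eval_charpoly_add_vecMulVec {A : Matrix ι ι K} {u w : ι → K}
    (h : ∀ p : K[X], w ⬝ᵥ aeval A p *ᵥ u = 0) {x : K} (hx : A.charpoly.eval x ≠ 0) :
    (A + vecMulVec u w).charpoly.eval x = A.charpoly.eval x := by
  rw [eval_charpoly] at hx ⊢
  obtain ⟨q, hq⟩ := exists_aeval_eq_nonsing_inv (scalar ι x - A)
  have hshift : aeval A (C x - X) = scalar ι x - A := by
    rw [map_sub, aeval_C, aeval_X]; rfl
  have hsplit : scalar ι x - (A + vecMulVec u w) = scalar ι x - A + vecMulVec (-u) w := by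
    rw [neg_vecMulVec]; abel
  rw [eval_charpoly, hsplit, det_add_vecMulVec hx.isUnit, ← hq, ← hshift, ← aeval_comp,
    mulVec_neg, dotProduct_neg, h, neg_zero, add_zero, mul_one]

theorem charpoly_add_vecMulVec_eq [Infinite K] {A : Matrix ι ι K} {u w : ι → K}
    (h : ∀ p : K[X], w ⬝ᵥ aeval A p *ᵥ u = 0) :
    (A + vecMulVec u w).charpoly = A.charpoly :=
  eq_of_infinite_eval_eq _ _ <|
    (finite_setOfPred_isRoot A.charpoly_monic.ne_zero).infinite_compl.mono
      fun _ hx => eval_charpoly_add_vecMulVec h hx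

end Matrix

theorem stmt6 {n : ℕ} (A : Matrix (Fin n) (Fin n) ℂ) (u v : Fin n → ℂ)
    (h : ∀ j < (minpoly ℂ A).natDegree, star v ⬝ᵥ (A ^ j).mulVec u = 0) :
    ∀ τ : ℂ, (A + τ • vecMulVec u (star v)).charpoly = A.charpoly := by
  intro τ
  rw [← smul_vecMulVec]
  refine charpoly_add_vecMulVec_eq fun p => ?_
  rw [mulVec_smul, dotProduct_smul, dotProduct_aeval_mulVec_eq_zero h p, smul_zero]
end

section
/- Let A be an n×n complex matrix, u, v ∈ ℂⁿ, let m_A denote the minimal polynomial of A of degree l, and let p_{uv} be the polynomial satisfying p_{uv}(λ) = v* m_A(λ)(λIₙ − A)⁻¹u for λ outside the spectrum of A. Suppose there exists κ ∈ {0,…,l−1} with v*u = ⋯ = v*A^{κ−1}u = 0 and v*A^{κ}u ≠ 0. Then the degree of p_{uv} is exactly l − κ − 1, and its leading coefficient equals v*A^{κ}u. -/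
/-!
Write `c j = v* A^j u`. Peeling coefficients off `m = m_A` one at a time (`divX`) gives the
telescoping identity `m(λ) (λ - A)⁻¹ = ∑ᵢ (divX^[i+1] m)(λ) Aⁱ`, which only uses `m(A) = 0`.
Hence `p_{uv} = ∑ᵢ cᵢ · divX^[i+1] m`, whose `k`-th coefficient is `∑ᵢ cᵢ m_{k+i+1}`.
Since `cᵢ = 0` for `i < κ` and `m` is monic of degree `l`, the top surviving coefficient sits at
`k = l - κ - 1`, where only `i = κ` contributes, with value `c_κ`.
-/

open Matrix Polynomial Finset

namespace Polynomial

section Semiring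

variable {R : Type*} [Semiring R]

theorem coeff_iterate_divX (p : R[X]) (i k : ℕ) : (divX^[i] p).coeff k = p.coeff (k + i) := by
  induction i generalizing p with
  | zero => rfl
  | succ i ih => rw [Function.iterate_succ_apply, ih, coeff_divX, add_assoc]

theorem iterate_divX_eq_zero {p : R[X]} {i : ℕ} (h : p.natDegree < i) : divX^[i] p = 0 :=
  ext fun k => by rw [coeff_iterate_divX, coeff_zero, coeff_eq_zero_of_natDegree_lt (by omega)]

theorem eval_iterate_divX (p : R[X]) (i : ℕ) (x : R) :
    (divX^[i] p).eval x = (divX^[i + 1] p).eval x * x + p.coeff i := by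
  conv_lhs => rw [← divX_mul_X_add (divX^[i] p)]
  rw [Function.iterate_succ_apply', eval_add, eval_mul_X, eval_C, coeff_iterate_divX, zero_add]

/-- With `c i = φ (a ^ i)` for a linear functional `φ` and `m(a) = 0`, this is the polynomial
`λ ↦ m(λ) φ((λ - a)⁻¹)`. -/
noncomputable def resolventNumerator (m : R[X]) (c : ℕ → R) : R[X] :=
  ∑ i ∈ range (m.natDegree + 1), C (c i) * divX^[i + 1] m

theorem coeff_resolventNumerator (m : R[X]) (c : ℕ → R) (k : ℕ) :
    (resolventNumerator m c).coeff k =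
      ∑ i ∈ range (m.natDegree + 1), c i * m.coeff (k + (i + 1)) := by
  simp only [resolventNumerator, finsetSum_coeff, coeff_C_mul, coeff_iterate_divX]

section Vanishing

variable {m : R[X]} {c : ℕ → R} {κ : ℕ}

theorem coeff_resolventNumerator_eq_zero (hc : ∀ j < κ, c j = 0) {k : ℕ}
    (hk : m.natDegree - κ - 1 < k) :
    (resolventNumerator m c).coeff k = 0 := by
  rw [coeff_resolventNumerator]
  refine sum_eq_zero fun i _ => ?_
  rcases lt_or_ge i κ with hi | hi
  · rw [hc i hi, zero_mul]
  · rw [coeff_eq_zero_of_natDegree_lt (by omega), mul_zero]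

theorem coeff_resolventNumerator_natDegree_sub (hc : ∀ j < κ, c j = 0) (hm : m.Monic)
    (hκ : κ < m.natDegree) :
    (resolventNumerator m c).coeff (m.natDegree - κ - 1) = c κ := by
  rw [coeff_resolventNumerator, sum_eq_single κ]
  · rw [show m.natDegree - κ - 1 + (κ + 1) = m.natDegree by omega, hm.coeff_natDegree, mul_one]
  · intro i _ hiκ
    rcases lt_or_gt_of_ne hiκ with hi | hi
    · rw [hc i hi, zero_mul]
    · rw [coeff_eq_zero_of_natDegree_lt (by omega), mul_zero]
  · intro hκ'
    exact absurd (mem_range.mpr (by omega)) hκ'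

theorem natDegree_resolventNumerator (hc : ∀ j < κ, c j = 0) (hm : m.Monic)
    (hκ : κ < m.natDegree) (hcκ : c κ ≠ 0) :
    (resolventNumerator m c).natDegree = m.natDegree - κ - 1 := by
  refine natDegree_eq_of_le_of_coeff_ne_zero ?_ ?_
  · exact natDegree_le_iff_coeff_eq_zero.mpr fun k hk => coeff_resolventNumerator_eq_zero hc hk
  · rwa [coeff_resolventNumerator_natDegree_sub hc hm hκ]

theorem leadingCoeff_resolventNumerator (hc : ∀ j < κ, c j = 0) (hm : m.Monic)
    (hκ : κ < m.natDegree) (hcκ : c κ ≠ 0) :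
    (resolventNumerator m c).leadingCoeff = c κ := by
  rw [leadingCoeff, natDegree_resolventNumerator hc hm hκ hcκ,
    coeff_resolventNumerator_natDegree_sub hc hm hκ]

end Vanishing

end Semiring

section Algebra

variable {R S : Type*} [CommRing R] [Ring S] [Algebra R S]

theorem algebraMap_sub_mul_sum_iterate_divX (m : R[X]) (a : S) (x : R) (N : ℕ) :
    (algebraMap R S x - a) * ∑ i ∈ range N, (divX^[i + 1] m).eval x • a ^ i =
      m.eval x • 1 - (divX^[N] m).eval x • a ^ N - ∑ i ∈ range N, m.coeff i • a ^ i := by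
  induction N with
  | zero => simp
  | succ N ih =>
    rw [sum_range_succ, mul_add, ih, sum_range_succ, eval_iterate_divX m N x, mul_smul_comm,
      sub_mul, Algebra.algebraMap_eq_smul_one, smul_one_mul, ← pow_succ', add_smul, mul_smul,
      smul_sub]
    abel

theorem smul_ringInverse_algebraMap_sub {m : R[X]} {a : S} (hm : aeval a m = 0) {x : R}
    (hx : x ∉ spectrum R a) :
    m.eval x • Ring.inverse (algebraMap R S x - a) =
      ∑ i ∈ range (m.natDegree + 1), (divX^[i + 1] m).eval x • a ^ i := by
  have hmul := algebraMap_sub_mul_sum_iterate_divX m a x (m.natDegree + 1)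
  rw [iterate_divX_eq_zero (Nat.lt_succ_self _), eval_zero, zero_smul, sub_zero,
    ← aeval_eq_sum_range, hm, sub_zero] at hmul
  rw [← mul_one (Ring.inverse _), ← mul_smul_comm, ← hmul, ← mul_assoc,
    Ring.inverse_mul_cancel _ (spectrum.notMem_iff.mp hx), one_mul]

theorem eval_resolventNumerator_eq {m : R[X]} {a : S} (hm : aeval a m = 0) (φ : S →ₗ[R] R)
    {x : R} (hx : x ∉ spectrum R a) :
    (resolventNumerator m fun i => φ (a ^ i)).eval x =
      m.eval x * φ (Ring.inverse (algebraMap R S x - a)) := by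
  rw [← smul_eq_mul, ← map_smul, smul_ringInverse_algebraMap_sub hm hx, map_sum,
    resolventNumerator, eval_finsetSum]
  simp only [eval_mul, eval_C, map_smul, smul_eq_mul, mul_comm]

end Algebra

end Polynomial

theorem stmt7 {n : ℕ} (A : Matrix (Fin n) (Fin n) ℂ) (u v : Fin n → ℂ)
    (p : Polynomial ℂ)
    (hp : ∀ lam ∉ spectrum ℂ A,
      p.eval lam = (minpoly ℂ A).eval lam *
        (star v ⬝ᵥ (lam • (1 : Matrix (Fin n) (Fin n) ℂ) - A)⁻¹.mulVec u))
    (κ : ℕ) (hκ : κ < (minpoly ℂ A).natDegree)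
    (h0 : ∀ j < κ, star v ⬝ᵥ (A ^ j).mulVec u = 0)
    (hκ0 : star v ⬝ᵥ (A ^ κ).mulVec u ≠ 0) :
    p.natDegree = (minpoly ℂ A).natDegree - κ - 1 ∧
      p.leadingCoeff = star v ⬝ᵥ (A ^ κ).mulVec u := by
  let φ : Matrix (Fin n) (Fin n) ℂ →ₗ[ℂ] ℂ :=
    { toFun := fun M => star v ⬝ᵥ M.mulVec u
      map_add' := fun M N => by simp only [add_mulVec, dotProduct_add]
      map_smul' := fun r M => by simp only [smul_mulVec, dotProduct_smul, RingHom.id_apply] }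
  have hpq : p = resolventNumerator (minpoly ℂ A) fun j => φ (A ^ j) := by
    refine eq_of_infinite_eval_eq _ _ ((finite_spectrum A).infinite_compl.mono fun x hx => ?_)
    rw [Set.mem_ofPred_eq, hp x hx, eval_resolventNumerator_eq (minpoly.aeval ℂ A) φ hx,
      Algebra.algebraMap_eq_smul_one, nonsing_inv_eq_ringInverse]
    rfl
  have hm : (minpoly ℂ A).Monic := minpoly.monic (Algebra.IsIntegral.isIntegral A)
  subst hpq
  exact ⟨natDegree_resolventNumerator h0 hm hκ hκ0,
    leadingCoeff_resolventNumerator h0 hm hκ hκ0⟩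
end

section
/- Let A be an n×n complex matrix, u, v ∈ ℂⁿ, and suppose there exists κ ≥ 0 with v*u = ⋯ = v*A^{κ−1}u = 0. Let τ ∈ ℂ be nonzero and let λ be an eigenvalue of B(τ) = A + τ u v* that is not an eigenvalue of A and satisfies |λ| > ‖A‖. Then λ^{κ+1}/τ = ∑_{j=0}^∞ λ^{−j} v*A^{κ+j}u, where the series converges absolutely. -/
/-!
Since `|λ| > ‖A‖`, the resolvent has the Neumann expansion
`(λ - A)⁻¹ = ∑ λ^{-(j+1)} A^j`, absolutely convergent in operator norm, so in particular `λ` is not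
an eigenvalue of `A`. By the matrix determinant lemma,
`det (λ - A - τ u v*) = det (λ - A) (1 - τ v* (λ - A)⁻¹ u)`, so `λ` being an eigenvalue of `B(τ)`
means `v* (λ - A)⁻¹ u = 1/τ`. Pairing the Neumann series with `v*` and `u`, the first `κ` terms
vanish, and multiplying by `λ^{κ+1}` gives the claimed expansion.
-/

open Matrix

namespace spectrum

variable {𝕜 A : Type*} [NormedField 𝕜] [NormedRing A] [NormedAlgebra 𝕜 A] {a : A} {k : 𝕜}

lemma norm_inv_smul_lt_one (h : ‖a‖ < ‖k‖) : ‖k⁻¹ • a‖ < 1 :=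
  calc ‖k⁻¹ • a‖ ≤ ‖k‖⁻¹ * ‖a‖ := by simpa only [norm_inv] using norm_smul_le k⁻¹ a
    _ < 1 := (inv_mul_lt_one₀ ((norm_nonneg a).trans_lt h)).mpr h

lemma resolvent_eq_inv_smul_inverse_one_sub (hk : k ≠ 0) :
    resolvent a k = k⁻¹ • Ring.inverse (1 - k⁻¹ • a) := by
  have := units_smul_resolvent_self (r := Units.mk0 k hk) (a := a)
  simp only [Units.smul_def, Units.val_inv_eq_inv_val, Units.val_mk0, resolvent, map_one] at this
  rw [← this, inv_smul_smul₀ hk, resolvent]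

lemma summable_norm_inv_pow_smul_pow_add (h : ‖a‖ < ‖k‖) (m : ℕ) :
    Summable fun j : ℕ ↦ ‖k⁻¹ ^ j • a ^ (m + j)‖ := by
  refine ((summable_norm_geometric_of_norm_lt_one (norm_inv_smul_lt_one h)).mul_left ‖a ^ m‖
    ).of_nonneg_of_le (fun _ ↦ norm_nonneg _) fun j ↦ ?_
  rw [pow_add, ← mul_smul_comm, ← smul_pow]
  exact norm_mul_le _ _

variable [HasSummableGeomSeries A]

/-- Unlike `spectrum.mem_resolventSet_of_norm_lt`, this needs no `NormOneClass`: the L2 operator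
norm on `Matrix (Fin 0) (Fin 0) 𝕜` has `‖1‖ = 0`. -/
lemma mem_resolventSet_of_norm_lt' (h : ‖a‖ < ‖k‖) : k ∈ resolventSet 𝕜 a := by
  have hk : k ≠ 0 := norm_pos_iff.mp ((norm_nonneg a).trans_lt h)
  have : algebraMap 𝕜 A k - a = Units.mk0 k hk • (1 - k⁻¹ • a) := by
    rw [Units.smul_mk0, smul_sub, smul_inv_smul₀ hk, Algebra.algebraMap_eq_smul_one]
  rw [mem_resolventSet_iff, this]
  exact (isUnit_one_sub_of_norm_lt_one (norm_inv_smul_lt_one h)).smul _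

theorem hasSum_resolvent_of_norm_lt (h : ‖a‖ < ‖k‖) :
    HasSum (fun j : ℕ ↦ k⁻¹ ^ (j + 1) • a ^ j) (resolvent a k) := by
  rw [resolvent_eq_inv_smul_inverse_one_sub (norm_pos_iff.mp ((norm_nonneg a).trans_lt h))]
  convert (hasSum_geom_series_inverse _ (norm_inv_smul_lt_one h)).const_smul k⁻¹ using 2 with j
  rw [smul_pow, smul_smul, pow_succ']

end spectrum

theorem HasSum.zpow_neg_mul_nat_add {K : Type*} [Field K] [TopologicalSpace K] [IsTopologicalRing K]
    {c : ℕ → K} {k s : K} (h : HasSum (fun j ↦ k⁻¹ ^ (j + 1) * c j) s) (hk : k ≠ 0) {m : ℕ}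
    (hc : ∀ i < m, c i = 0) :
    HasSum (fun j : ℕ ↦ k ^ (-(j : ℤ)) * c (m + j)) (k ^ (m + 1) * s) := by
  have hshift := (hasSum_nat_add_iff' m).mpr h
  rw [Finset.sum_eq_zero fun i hi ↦ by rw [hc i (Finset.mem_range.mp hi), mul_zero], sub_zero]
    at hshift
  have hterm (j : ℕ) :
      k ^ (m + 1) * (k⁻¹ ^ (j + m + 1) * c (j + m)) = k ^ (-(j : ℤ)) * c (m + j) := by
    rw [add_comm j m, ← mul_assoc, _root_.zpow_neg, zpow_natCast]
    congr 1
    rw [add_right_comm, pow_add k⁻¹, ← mul_assoc, ← mul_pow, mul_inv_cancel₀ hk, one_pow, one_mul,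
      inv_pow]
  simpa only [hterm] using hshift.mul_left (k ^ (m + 1))

namespace Matrix

variable {n 𝕜 : Type*} [Fintype n]

theorem det_sub_vecMulVec [DecidableEq n] {R : Type*} [CommRing R]
    {M : Matrix n n R} (hM : IsUnit M.det) (u w : n → R) :
    (M - vecMulVec u w).det = M.det * (1 - w ⬝ᵥ M⁻¹ *ᵥ u) := by
  have : M - vecMulVec u w = M * (1 + vecMulVec (M⁻¹ *ᵥ u) (-w)) := by
    rw [Matrix.mul_add, Matrix.mul_one, mul_vecMulVec, mulVec_mulVec, mul_nonsing_inv M hM,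
      one_mulVec, vecMulVec_neg, sub_eq_add_neg]
  rw [this, det_mul, vecMulVec_eq Unit, det_one_add_replicateCol_mul_replicateRow, neg_dotProduct,
    ← sub_eq_add_neg]

theorem mem_spectrum_add_vecMulVec_iff [DecidableEq n] {K : Type*} [Field K] {A : Matrix n n K}
    {k : K} (hk : k ∈ resolventSet K A) (u w : n → K) :
    k ∈ spectrum K (A + vecMulVec u w) ↔ w ⬝ᵥ resolvent A k *ᵥ u = 1 := by
  have hdet : IsUnit (algebraMap K _ k - A).det := (isUnit_iff_isUnit_det _).mp hk
  rw [spectrum.mem_iff, isUnit_iff_isUnit_det, ← sub_sub, det_sub_vecMulVec hdet, IsUnit.mul_iff,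
    and_iff_right hdet, isUnit_iff_ne_zero, not_not, sub_eq_zero, eq_comm, resolvent,
    ← nonsing_inv_eq_ringInverse]

open scoped Matrix.Norms.L2Operator

variable [RCLike 𝕜]

noncomputable def dotProductMulVecCLM (w u : n → 𝕜) : Matrix n n 𝕜 →L[𝕜] 𝕜 :=
  LinearMap.toContinuousLinearMap
    { toFun N := w ⬝ᵥ N *ᵥ u
      map_add' N N' := by rw [add_mulVec, dotProduct_add]
      map_smul' c N := by rw [smul_mulVec, dotProduct_smul, RingHom.id_apply] }

@[simp]
lemma dotProductMulVecCLM_apply (w u : n → 𝕜) (N : Matrix n n 𝕜) :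
    dotProductMulVecCLM w u N = w ⬝ᵥ N *ᵥ u := rfl

variable [DecidableEq n] {A : Matrix n n 𝕜} {k : 𝕜}

theorem hasSum_dotProduct_pow_mulVec (h : ‖A‖ < ‖k‖) (w u : n → 𝕜) :
    HasSum (fun j : ℕ ↦ k⁻¹ ^ (j + 1) * (w ⬝ᵥ (A ^ j) *ᵥ u)) (w ⬝ᵥ resolvent A k *ᵥ u) := by
  simpa only [dotProductMulVecCLM_apply, smul_mulVec, dotProduct_smul, smul_eq_mul] using
    (spectrum.hasSum_resolvent_of_norm_lt h).mapL (dotProductMulVecCLM w u)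

theorem summable_norm_zpow_neg_mul_dotProduct_pow_mulVec (h : ‖A‖ < ‖k‖) (m : ℕ) (w u : n → 𝕜) :
    Summable fun j : ℕ ↦ ‖k ^ (-(j : ℤ)) * (w ⬝ᵥ (A ^ (m + j)) *ᵥ u)‖ := by
  refine ((spectrum.summable_norm_inv_pow_smul_pow_add h m).mul_left
    ‖dotProductMulVecCLM w u‖).of_nonneg_of_le (fun _ ↦ norm_nonneg _) fun j ↦ ?_
  have : k ^ (-(j : ℤ)) * (w ⬝ᵥ (A ^ (m + j)) *ᵥ u) =
      dotProductMulVecCLM w u (k⁻¹ ^ j • A ^ (m + j)) := by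
    simp only [map_smul, dotProductMulVecCLM_apply, smul_eq_mul, _root_.zpow_neg, zpow_natCast,
      inv_pow]
  rw [this]
  exact (dotProductMulVecCLM w u).le_opNorm _

end Matrix

theorem stmt9_general {n : ℕ} (A : Matrix (Fin n) (Fin n) ℂ) (u v : Fin n → ℂ) (κ : ℕ)
    (h0 : ∀ j < κ, star v ⬝ᵥ (A ^ j).mulVec u = 0) (τ : ℂ) (lam : ℂ)
    (hB : lam ∈ spectrum ℂ (A + τ • vecMulVec u (star v)))
    (hnorm : ‖Matrix.toEuclideanCLM (𝕜 := ℂ) A‖ < ‖lam‖) :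
    HasSum (fun j : ℕ => lam ^ (-(j : ℤ)) * (star v ⬝ᵥ (A ^ (κ + j)).mulVec u))
        (lam ^ (κ + 1) / τ) ∧
      Summable (fun j : ℕ => ‖lam ^ (-(j : ℤ)) * (star v ⬝ᵥ (A ^ (κ + j)).mulVec u)‖) := by
  open scoped Matrix.Norms.L2Operator in
  have hnorm : ‖A‖ < ‖lam‖ := hnorm
  have hlam : lam ≠ 0 := norm_pos_iff.mp ((norm_nonneg _).trans_lt hnorm)
  have hres : lam ∈ resolventSet ℂ A := spectrum.mem_resolventSet_of_norm_lt' hnorm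
  have hτinv : star v ⬝ᵥ resolvent A lam *ᵥ u = τ⁻¹ := by
    rw [← smul_vecMulVec, mem_spectrum_add_vecMulVec_iff hres, mulVec_smul, dotProduct_smul,
      smul_eq_mul] at hB
    exact eq_inv_of_mul_eq_one_right hB
  refine ⟨?_, summable_norm_zpow_neg_mul_dotProduct_pow_mulVec hnorm κ _ _⟩
  rw [div_eq_mul_inv, ← hτinv]
  exact (hasSum_dotProduct_pow_mulVec hnorm _ _).zpow_neg_mul_nat_add hlam h0

theorem stmt9 {n : ℕ} (A : Matrix (Fin n) (Fin n) ℂ) (u v : Fin n → ℂ) (κ : ℕ)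
    (h0 : ∀ j < κ, star v ⬝ᵥ (A ^ j).mulVec u = 0) (τ : ℂ) (hτ : τ ≠ 0) (lam : ℂ)
    (hB : lam ∈ spectrum ℂ (A + τ • vecMulVec u (star v)))
    (hA : lam ∉ spectrum ℂ A)
    (hnorm : ‖Matrix.toEuclideanCLM (𝕜 := ℂ) A‖ < ‖lam‖) :
    HasSum (fun j : ℕ => lam ^ (-(j : ℤ)) * (star v ⬝ᵥ (A ^ (κ + j)).mulVec u))
        (lam ^ (κ + 1) / τ) ∧
      Summable (fun j : ℕ => ‖lam ^ (-(j : ℤ)) * (star v ⬝ᵥ (A ^ (κ + j)).mulVec u)‖) :=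
  stmt9_general A u v κ h0 τ lam hB hnorm
end

section
/- Let A be an n×n complex matrix, u, v ∈ ℂⁿ, let l be the degree of the minimal polynomial m_A of A, and suppose v*u = ⋯ = v*A^{κ−1}u = 0 and v*A^{κ}u ≠ 0 for some κ ∈ {0,…,l−1}. Suppose λ : [T,∞) → ℂ is a function of real t ≥ T such that λ(t) is an eigenvalue of A + t u v* for every t ≥ T and λ(t) admits the asymptotic expansion λ(t) = c₋₁ t^{1/(κ+1)} + c₀ + c₁ t^{−1/(κ+1)} + o(t^{−1/(κ+1)}) as t → ∞ with c₋₁ ≠ 0. Then c₋₁^{κ+1} = v*A^{κ}u, c₀ = (1/(κ+1)) · (v*A^{κ+1}u)/(v*A^{κ}u), and (κ+1)·((κ+2)/2 · c₋₁^{κ+1}c₀² + c₋₁^{κ+2}c₁) = v*A^{κ+2}u. -/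
open Matrix Filter Asymptotics

/-!
Write `m_j = v* A^j u`. Away from the spectrum of `A`, the matrix determinant lemma turns
`λ ∈ σ(A + t u v*)` into the secular equation `t · v* (λ - A)⁻¹ u = 1`, and the Neumann
expansion of the resolvent gives `v* (λ - A)⁻¹ u = ∑_{j < N} m_j / λ^{j+1} + o(λ^{-N})`.
Put `z = t^{-1/(κ+1)}` and `μ = λ z`, so that `μ = c₋₁ + c₀ z + c₁ z² + o(z²)`. Since
`m_j = 0` for `j < κ` and `t z^{κ+1} = 1`, the secular equation with `N = κ + 3` becomes the
polynomial relation `m_κ μ² + m_{κ+1} z μ + (m_{κ+2} + o(1)) z² = μ^{κ+3}`, and comparing the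
coefficients of `1, z, z²` on both sides gives the three identities.
-/

open Bornology Finset Topology

section Expansion

variable {α R : Type*} [CommRing R] [TopologicalSpace R]

/-- `f = a + b z + c z² + o(z²)` along `l`. -/
def HasSecondOrderExpansion (l : Filter α) (z f : α → R) (a b c : R) : Prop :=
  ∃ D : α → R, Tendsto D l (𝓝 c) ∧ ∀ᶠ x in l, f x = a + b * z x + z x ^ 2 * D x

namespace HasSecondOrderExpansion

variable {l : Filter α} {z f g : α → R} {a b c a' b' c' : R}

theorem self : HasSecondOrderExpansion l z z 0 1 0 :=
  ⟨0, tendsto_const_nhds, .of_forall fun x => by simp⟩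

variable [IsTopologicalRing R]

theorem tendsto (hz : Tendsto z l (𝓝 0)) (h : HasSecondOrderExpansion l z f a b c) :
    Tendsto f l (𝓝 a) := by
  obtain ⟨D, hD, hf⟩ := h
  have hlim := (tendsto_const_nhds (x := a)).add
    (((tendsto_const_nhds (x := b)).mul hz).add ((hz.pow 2).mul hD))
  rw [mul_zero, zero_pow two_ne_zero, zero_mul, add_zero, add_zero] at hlim
  refine hlim.congr' ?_
  filter_upwards [hf] with x hx
  rw [hx, add_assoc]

theorem const_mul (h : HasSecondOrderExpansion l z f a b c) (r : R) :
    HasSecondOrderExpansion l z (fun x => r * f x) (r * a) (r * b) (r * c) := by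
  obtain ⟨D, hD, hf⟩ := h
  refine ⟨fun x => r * D x, tendsto_const_nhds.mul hD, ?_⟩
  filter_upwards [hf] with x hx
  rw [hx]; ring

theorem add (hf : HasSecondOrderExpansion l z f a b c)
    (hg : HasSecondOrderExpansion l z g a' b' c') :
    HasSecondOrderExpansion l z (fun x => f x + g x) (a + a') (b + b') (c + c') := by
  obtain ⟨D, hD, hf⟩ := hf
  obtain ⟨D', hD', hg⟩ := hg
  refine ⟨fun x => D x + D' x, hD.add hD', ?_⟩
  filter_upwards [hf, hg] with x hx hx'
  rw [hx, hx']; ring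

theorem mul (hz : Tendsto z l (𝓝 0)) (hf : HasSecondOrderExpansion l z f a b c)
    (hg : HasSecondOrderExpansion l z g a' b' c') :
    HasSecondOrderExpansion l z (fun x => f x * g x) (a * a') (a * b' + b * a')
      (a * c' + b * b' + c * a') := by
  obtain ⟨D, hD, hf⟩ := hf
  obtain ⟨D', hD', hg⟩ := hg
  refine ⟨fun x => a * D' x + b * b' + D x * a' + z x * (b * D' x + D x * b')
    + z x ^ 2 * (D x * D' x), ?_, ?_⟩
  · convert ((((tendsto_const_nhds (x := a)).mul hD').add (tendsto_const_nhds (x := b * b'))).add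
      (hD.mul (tendsto_const_nhds (x := a')))).add
      (hz.mul (((tendsto_const_nhds (x := b)).mul hD').add (hD.mul (tendsto_const_nhds (x := b')))))
      |>.add ((hz.pow 2).mul (hD.mul hD')) using 2
    simp
  · filter_upwards [hf, hg] with x hx hx'
    rw [hx, hx']; ring

theorem pow_add_two (hz : Tendsto z l (𝓝 0)) (h : HasSecondOrderExpansion l z f a b c) (k : ℕ) :
    HasSecondOrderExpansion l z (fun x => f x ^ (k + 2)) (a ^ (k + 2))
      ((k + 2) * a ^ (k + 1) * b)
      ((k + 2) * a ^ (k + 1) * c + (k + 2).choose 2 * a ^ k * b ^ 2) := by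
  induction k with
  | zero =>
    convert h.mul hz h using 1
    · funext x; ring
    all_goals norm_num; ring
  | succ k ih =>
    convert ih.mul hz h using 1
    · funext x; ring
    · ring
    · push_cast; ring
    · rw [Nat.choose_succ_succ' (k + 2), Nat.choose_one_right]; push_cast; ring

theorem unique [T2Space R] [NoZeroDivisors R] [l.NeBot] (hz : Tendsto z l (𝓝 0))
    (hz0 : ∀ᶠ x in l, z x ≠ 0) (hf : HasSecondOrderExpansion l z f a b c)
    (hg : HasSecondOrderExpansion l z g a' b' c') (hfg : f =ᶠ[l] g) :
    a = a' ∧ b = b' ∧ c = c' := by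
  obtain ⟨D, hD, hf⟩ := hf
  obtain ⟨D', hD', hg⟩ := hg
  have hdiff : ∀ᶠ x in l, a' - a = ((b - b') + z x * (D x - D' x)) * z x := by
    filter_upwards [hf, hg, hfg] with x h1 h2 h3
    linear_combination h1 - h2 - h3
  have ha : a = a' := by
    have hlim := ((tendsto_const_nhds (x := b - b')).add (hz.mul (hD.sub hD'))).mul hz
    rw [mul_zero] at hlim
    exact (sub_eq_zero.1 (tendsto_nhds_unique (tendsto_const_nhds.congr' hdiff) hlim)).symm
  subst ha
  have hdiff' : ∀ᶠ x in l, b' - b = z x * (D x - D' x) := by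
    filter_upwards [hdiff, hz0] with x hx hx0
    rw [sub_self, eq_comm, mul_eq_zero] at hx
    linear_combination -hx.resolve_right hx0
  have hb : b = b' := by
    have hlim := hz.mul (hD.sub hD')
    rw [zero_mul] at hlim
    exact (sub_eq_zero.1 (tendsto_nhds_unique (tendsto_const_nhds.congr' hdiff') hlim)).symm
  subst hb
  have hDD' : D =ᶠ[l] D' := by
    filter_upwards [hdiff', hz0] with x hx hx0
    exact sub_eq_zero.1 ((mul_eq_zero.1 (hx.symm.trans (sub_self b))).resolve_left hx0)
  exact ⟨rfl, rfl, tendsto_nhds_unique (hD.congr' hDD') hD'⟩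

end HasSecondOrderExpansion

end Expansion

theorem HasSecondOrderExpansion.mul_of_isLittleO {α 𝕜 : Type*} [NormedField 𝕜] {l : Filter α}
    {z f : α → 𝕜} {a b c : 𝕜} (hz0 : ∀ᶠ x in l, z x ≠ 0)
    (h : (fun x => f x - (a * (z x)⁻¹ + b + c * z x)) =o[l] z) :
    HasSecondOrderExpansion l z (fun x => f x * z x) a b c := by
  refine ⟨fun x => c + (f x - (a * (z x)⁻¹ + b + c * z x)) / z x, ?_, ?_⟩
  · simpa using h.tendsto_div_nhds_zero.const_add c
  · filter_upwards [hz0] with x hx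
    field_simp
    ring

theorem HasSecondOrderExpansion.coeffs_of_secular_eq {α 𝕜 : Type*} [Field 𝕜] [CharZero 𝕜]
    [TopologicalSpace 𝕜] [IsTopologicalRing 𝕜] [T2Space 𝕜] {l : Filter α} [l.NeBot]
    {z μ ρ : α → 𝕜} {c c₀ c₁ m₀ m₁ m₂ : 𝕜} {k : ℕ} (hz : Tendsto z l (𝓝 0))
    (hz0 : ∀ᶠ x in l, z x ≠ 0) (hμ : HasSecondOrderExpansion l z μ c c₀ c₁) (hc : c ≠ 0)
    (hρ : Tendsto ρ l (𝓝 0))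
    (h : ∀ᶠ x in l, m₀ * μ x ^ 2 + m₁ * (z x * μ x) + (m₂ + ρ x) * z x ^ 2 = μ x ^ (k + 3)) :
    m₀ = c ^ (k + 1) ∧ m₁ = (k + 1) * c₀ * m₀ ∧
      m₂ = (k + 1) * ((k + 2) / 2 * c ^ (k + 1) * c₀ ^ 2 + c ^ (k + 2) * c₁) := by
  have hρ' : HasSecondOrderExpansion l z (fun x => (m₂ + ρ x) * z x ^ 2) 0 0 m₂ :=
    ⟨fun x => m₂ + ρ x, by simpa using hρ.const_add m₂, .of_forall fun x => by ring⟩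
  have hlhs := (((hμ.pow_add_two hz 0).const_mul m₀).add
    ((HasSecondOrderExpansion.self.mul hz hμ).const_mul m₁)).add hρ'
  obtain ⟨e₀, e₁, e₂⟩ := hlhs.unique hz hz0 (hμ.pow_add_two hz (k + 1)) h
  simp only [Nat.cast_choose_two] at e₂
  push_cast at e₀ e₁ e₂
  have hm₀ : m₀ = c ^ (k + 1) := by
    apply mul_right_cancel₀ (pow_ne_zero 2 hc)
    linear_combination e₀
  have hm₁ : m₁ = (k + 1) * c₀ * m₀ := by
    apply mul_right_cancel₀ hc
    linear_combination e₁ - (k + 3) * c * c₀ * hm₀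
  refine ⟨hm₀, hm₁, ?_⟩
  linear_combination e₂ - c₀ * hm₁ - (2 * c * c₁ + (k + 2) * c₀ ^ 2) * hm₀

section Resolvent

variable {K A : Type*} [Field K] [Ring A] [Algebra K A]

theorem resolvent_eq_sum_add {a : A} {μ : K} (hμ : μ ∈ resolventSet K a) (hμ0 : μ ≠ 0) (N : ℕ) :
    resolvent a μ =
      ∑ j ∈ range N, μ⁻¹ ^ (j + 1) • a ^ j + μ⁻¹ ^ N • (resolvent a μ * a ^ N) := by
  have hstep : μ • resolvent a μ = 1 + resolvent a μ * a := by
    have h : resolvent a μ * (algebraMap K A μ - a) = 1 :=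
      Ring.inverse_mul_cancel _ (spectrum.mem_resolventSet_iff.1 hμ)
    rwa [mul_sub, ← Algebra.commutes, ← Algebra.smul_def, sub_eq_iff_eq_add] at h
  have htail (N : ℕ) : μ⁻¹ ^ N • (resolvent a μ * a ^ N) =
      μ⁻¹ ^ (N + 1) • a ^ N + μ⁻¹ ^ (N + 1) • (resolvent a μ * a ^ (N + 1)) := by
    rw [← smul_add, pow_succ' a N, ← mul_assoc, ← one_add_mul, ← hstep, smul_mul_assoc, smul_smul,
      pow_succ, mul_assoc, inv_mul_cancel₀ hμ0, mul_one]
  induction N with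
  | zero => simp
  | succ N ih => rwa [sum_range_succ, add_assoc, ← htail]

end Resolvent

section MatrixResolvent

variable {ι : Type*} [Fintype ι] [DecidableEq ι]

section Field

variable {K : Type*} [Field K]

theorem Matrix.resolvent_eq_inv (A : Matrix ι ι K) (μ : K) :
    resolvent A μ = (algebraMap K _ μ - A)⁻¹ := (nonsing_inv_eq_ringInverse _).symm

theorem Matrix.dotProduct_resolvent_mulVec_eq_one {A : Matrix ι ι K} {u w : ι → K} {μ : K}
    (hμ : μ ∈ spectrum K (A + vecMulVec u w)) (hA : μ ∈ resolventSet K A) :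
    w ⬝ᵥ resolvent A μ *ᵥ u = 1 := by
  have hB : IsUnit (algebraMap K _ μ - A).det :=
    (isUnit_iff_isUnit_det _).1 (spectrum.mem_resolventSet_iff.1 hA)
  have hsplit : algebraMap K _ μ - (A + vecMulVec u w) =
      (algebraMap K _ μ - A) + replicateCol Unit (-u) * replicateRow Unit w := by
    rw [← vecMulVec_eq, neg_vecMulVec]
    abel
  have hdet := mt (isUnit_iff_isUnit_det _).2 (spectrum.mem_iff.1 hμ)
  rw [hsplit, det_add_replicateCol_mul_replicateRow hB, isUnit_iff_ne_zero, not_not,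
    mul_eq_zero, or_iff_right hB.ne_zero, Matrix.mul_assoc, ← replicateCol_mulVec, det_unique,
    add_apply, one_apply_eq, replicateRow_mul_replicateCol_apply, mulVec_neg, dotProduct_neg,
    ← resolvent_eq_inv] at hdet
  linear_combination -hdet

theorem Matrix.dotProduct_resolvent_mulVec_eq_sum_add {A : Matrix ι ι K}
    {μ : K} (hμ : μ ∈ resolventSet K A) (hμ0 : μ ≠ 0) (u w : ι → K) (N : ℕ) :
    w ⬝ᵥ resolvent A μ *ᵥ u = ∑ j ∈ range N, (w ⬝ᵥ (A ^ j) *ᵥ u) / μ ^ (j + 1)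
      + (w ⬝ᵥ (resolvent A μ * A ^ N) *ᵥ u) / μ ^ N := by
  conv_lhs => rw [resolvent_eq_sum_add hμ hμ0 N]
  simp only [add_mulVec, sum_mulVec, smul_mulVec, dotProduct_add, dotProduct_sum,
    dotProduct_smul, smul_eq_mul, inv_pow, div_eq_inv_mul]

end Field

open scoped Norms.Operator in
theorem Matrix.tendsto_dotProduct_resolvent_mul_mulVec {𝕜 : Type*} [NontriviallyNormedField 𝕜]
    [CompleteSpace 𝕜] (A B : Matrix ι ι 𝕜) (u w : ι → 𝕜) :
    Tendsto (fun μ => w ⬝ᵥ (resolvent A μ * B) *ᵥ u) (cobounded 𝕜) (𝓝 0) := by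
  -- The global `CompleteSpace (Matrix ι ι 𝕜)` instance is for the entrywise uniform structure,
  -- not the one of the operator norm, so completeness is supplied by hand.
  have := FiniteDimensional.complete 𝕜 (Matrix ι ι 𝕜)
  have hcont : Continuous fun M : Matrix ι ι 𝕜 => w ⬝ᵥ (M * B) *ᵥ u := by fun_prop
  have h := (hcont.tendsto 0).comp (@spectrum.resolvent_tendsto_cobounded 𝕜 _ _ _ _ this A)
  rw [zero_mul, zero_mulVec, dotProduct_zero] at h
  exact h

theorem Matrix.eventually_mem_resolventSet {K : Type*} [NormedField K] (A : Matrix ι ι K) :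
    ∀ᶠ μ in cobounded K, μ ∈ resolventSet K A :=
  mem_of_superset (isBounded_def.1 (Matrix.finite_spectrum A).isBounded) fun _ =>
    spectrum.notMem_iff.1

theorem Matrix.exists_tendsto_zero_secular_eq {α 𝕜 : Type*} [NontriviallyNormedField 𝕜]
    [CompleteSpace 𝕜] {l : Filter α} {A : Matrix ι ι 𝕜} {u w : ι → 𝕜} {s lam : α → 𝕜}
    (hlam : Tendsto lam l (cobounded 𝕜))
    (heig : ∀ᶠ x in l, lam x ∈ spectrum 𝕜 (A + s x • vecMulVec u w)) (N : ℕ) :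
    ∃ ρ : α → 𝕜, Tendsto ρ l (𝓝 0) ∧ ∀ᶠ x in l,
      s x * (∑ j ∈ range N, (w ⬝ᵥ (A ^ j) *ᵥ u) / lam x ^ (j + 1) + ρ x / lam x ^ N) = 1 := by
  refine ⟨fun x => w ⬝ᵥ (resolvent A (lam x) * A ^ N) *ᵥ u,
    (tendsto_dotProduct_resolvent_mul_mulVec A _ u w).comp hlam, ?_⟩
  filter_upwards [heig, hlam.eventually (eventually_mem_resolventSet A),
    hlam.eventually_ne_cobounded 0] with x hx hres hne
  rw [← smul_vecMulVec] at hx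
  have h := dotProduct_resolvent_mulVec_eq_one hx hres
  rwa [mulVec_smul, dotProduct_smul, smul_eq_mul,
    dotProduct_resolvent_mulVec_eq_sum_add hres hne u w N] at h

end MatrixResolvent

theorem tendsto_cobounded_of_tendsto_mul {α 𝕜 : Type*} [NormedField 𝕜] {l : Filter α}
    {f z : α → 𝕜} {a : 𝕜} (ha : a ≠ 0) (hz : Tendsto z l (𝓝[≠] 0))
    (hf : Tendsto (fun x => f x * z x) l (𝓝 a)) : Tendsto f l (cobounded 𝕜) := by
  have hzinv := tendsto_norm_cobounded_atTop.comp (tendsto_inv₀_nhdsNE_zero.comp hz)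
  refine tendsto_norm_atTop_iff_cobounded.1
    ((hf.norm.pos_mul_atTop (norm_pos_iff.2 ha) hzinv).congr' ?_)
  filter_upwards [hz self_mem_nhdsWithin] with x hx
  rw [Function.comp_apply, Function.comp_apply, ← norm_mul, mul_inv_cancel_right₀ hx]

theorem secular_eq_rescale {K : Type*} [Field K] (k : ℕ) (m : ℕ → K) (hm : ∀ j < k, m j = 0)
    {t z lam r : K} (hlam : lam ≠ 0) (htz : t * z ^ (k + 1) = 1)
    (h : t * (∑ j ∈ range (k + 3), m j / lam ^ (j + 1) + r / lam ^ (k + 3)) = 1) :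
    m k * (lam * z) ^ 2 + m (k + 1) * (z * (lam * z)) + (m (k + 2) + r) * z ^ 2 =
      (lam * z) ^ (k + 3) := by
  rw [sum_range_succ, sum_range_succ, sum_range_succ,
    sum_eq_zero fun j hj => by rw [hm j (mem_range.1 hj), zero_div], zero_add] at h
  set S := m k / lam ^ (k + 1) + m (k + 1) / lam ^ (k + 2) + (m (k + 2) + r) / lam ^ (k + 3)
  have hS : lam ^ (k + 3) * S = m k * lam ^ 2 + m (k + 1) * lam + (m (k + 2) + r) := by
    simp only [S]
    field_simp
    ring
  linear_combination -z ^ 2 * hS - z ^ 2 * lam ^ (k + 3) * S * htz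
    + z ^ 2 * lam ^ (k + 3) * z ^ (k + 1) * h

theorem Complex.tendsto_ofReal_rpow_neg_atTop {y : ℝ} (hy : 0 < y) :
    Tendsto (fun t : ℝ => ((t ^ (-y) : ℝ) : ℂ)) atTop (𝓝[≠] 0) := by
  refine tendsto_nhdsWithin_iff.2 ⟨?_, ?_⟩
  · have h := (continuous_ofReal.tendsto 0).comp (tendsto_rpow_neg_atTop hy)
    rwa [ofReal_zero] at h
  · filter_upwards [eventually_gt_atTop 0] with t ht
    exact ofReal_ne_zero.2 (Real.rpow_pos_of_pos ht _).ne'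

theorem Real.mul_rpow_neg_inv_pow (k : ℕ) {t : ℝ} (ht : 0 < t) :
    t * (t ^ (-(1 : ℝ) / (k + 1))) ^ (k + 1) = 1 := by
  rw [← Real.rpow_natCast, ← Real.rpow_mul ht.le, Nat.cast_add_one,
    div_mul_cancel₀ _ (by positivity), Real.rpow_neg_one, mul_inv_cancel₀ ht.ne']

theorem stmt10_general {n : ℕ} (A : Matrix (Fin n) (Fin n) ℂ) (u v : Fin n → ℂ) (κ : ℕ)
    (h0 : ∀ j < κ, star v ⬝ᵥ (A ^ j).mulVec u = 0)
    (hκ0 : star v ⬝ᵥ (A ^ κ).mulVec u ≠ 0)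
    (T : ℝ) (lam : ℝ → ℂ) (cm1 c₀ c₁ : ℂ) (hc : cm1 ≠ 0)
    (heig : ∀ t : ℝ, T ≤ t → lam t ∈ spectrum ℂ (A + (t : ℂ) • vecMulVec u (star v)))
    (hexp : (fun t : ℝ => lam t -
        (cm1 * ((t ^ ((1 : ℝ) / (κ + 1)) : ℝ) : ℂ) + c₀ +
          c₁ * ((t ^ (-(1 : ℝ) / (κ + 1)) : ℝ) : ℂ)))
      =o[atTop] fun t : ℝ => ((t ^ (-(1 : ℝ) / (κ + 1)) : ℝ) : ℂ)) :
    cm1 ^ (κ + 1) = star v ⬝ᵥ (A ^ κ).mulVec u ∧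
    c₀ = (1 / (κ + 1 : ℂ)) * (star v ⬝ᵥ (A ^ (κ + 1)).mulVec u) /
      (star v ⬝ᵥ (A ^ κ).mulVec u) ∧
    (κ + 1 : ℂ) * (((κ + 2 : ℂ) / 2) * cm1 ^ (κ + 1) * c₀ ^ 2 + cm1 ^ (κ + 2) * c₁) =
      star v ⬝ᵥ (A ^ (κ + 2)).mulVec u := by
  set z : ℝ → ℂ := fun t => ((t ^ (-(1 : ℝ) / (κ + 1)) : ℝ) : ℂ) with hz_def
  have hz' : Tendsto z atTop (𝓝[≠] 0) := by
    rw [hz_def, neg_div]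
    exact Complex.tendsto_ofReal_rpow_neg_atTop (by positivity)
  obtain ⟨hz, hz0⟩ := tendsto_nhdsWithin_iff.1 hz'
  have hμ : HasSecondOrderExpansion atTop z (fun t => lam t * z t) cm1 c₀ c₁ := by
    refine HasSecondOrderExpansion.mul_of_isLittleO hz0 (hexp.congr' ?_ .rfl)
    filter_upwards [eventually_gt_atTop 0] with t ht
    simp [z, neg_div, Real.rpow_neg ht.le]
  have hlam := tendsto_cobounded_of_tendsto_mul hc hz' (hμ.tendsto hz)
  obtain ⟨ρ, hρ, hsec⟩ := exists_tendsto_zero_secular_eq hlam (eventually_atTop.2 ⟨T, heig⟩)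
    (κ + 3)
  have heq : ∀ᶠ t in atTop, star v ⬝ᵥ (A ^ κ) *ᵥ u * (lam t * z t) ^ 2
      + star v ⬝ᵥ (A ^ (κ + 1)) *ᵥ u * (z t * (lam t * z t))
      + (star v ⬝ᵥ (A ^ (κ + 2)) *ᵥ u + ρ t) * z t ^ 2 = (lam t * z t) ^ (κ + 3) := by
    filter_upwards [hsec, eventually_gt_atTop 0, hlam.eventually_ne_cobounded 0] with t hs ht hne
    refine secular_eq_rescale κ (fun j => star v ⬝ᵥ (A ^ j) *ᵥ u) h0 hne ?_ hs
    rw [← Complex.ofReal_pow, ← Complex.ofReal_mul, Real.mul_rpow_neg_inv_pow κ ht,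
      Complex.ofReal_one]
  obtain ⟨hm₀, hm₁, hm₂⟩ := hμ.coeffs_of_secular_eq hz hz0 hc hρ heq
  refine ⟨hm₀.symm, ?_, hm₂.symm⟩
  rw [hm₁]
  field_simp

theorem stmt10 {n : ℕ} (A : Matrix (Fin n) (Fin n) ℂ) (u v : Fin n → ℂ) (κ : ℕ)
    (hκl : κ < (minpoly ℂ A).natDegree)
    (h0 : ∀ j < κ, star v ⬝ᵥ (A ^ j).mulVec u = 0)
    (hκ0 : star v ⬝ᵥ (A ^ κ).mulVec u ≠ 0)
    (T : ℝ) (lam : ℝ → ℂ) (cm1 c₀ c₁ : ℂ) (hc : cm1 ≠ 0)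
    (heig : ∀ t : ℝ, T ≤ t → lam t ∈ spectrum ℂ (A + (t : ℂ) • vecMulVec u (star v)))
    (hexp : (fun t : ℝ => lam t -
        (cm1 * ((t ^ ((1 : ℝ) / (κ + 1)) : ℝ) : ℂ) + c₀ +
          c₁ * ((t ^ (-(1 : ℝ) / (κ + 1)) : ℝ) : ℂ)))
      =o[atTop] fun t : ℝ => ((t ^ (-(1 : ℝ) / (κ + 1)) : ℝ) : ℂ)) :
    cm1 ^ (κ + 1) = star v ⬝ᵥ (A ^ κ).mulVec u ∧
    c₀ = (1 / (κ + 1 : ℂ)) * (star v ⬝ᵥ (A ^ (κ + 1)).mulVec u) /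
      (star v ⬝ᵥ (A ^ κ).mulVec u) ∧
    (κ + 1 : ℂ) * (((κ + 2 : ℂ) / 2) * cm1 ^ (κ + 1) * c₀ ^ 2 + cm1 ^ (κ + 2) * c₁) =
      star v ⬝ᵥ (A ^ (κ + 2)).mulVec u :=
  stmt10_general A u v κ h0 hκ0 T lam cm1 c₀ c₁ hc heig hexp
end

section
/- Let A be an n×n complex matrix, u, v ∈ ℂⁿ with v*u ≠ 0. Then for all sufficiently large real t > 0 there exists an eigenvalue λ(t) of A + t u v* such that λ(t) = (v*u)·t + (v*Au)/(v*u) + O(1/t) as t → ∞. -/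
/-!
Write `w = 1 / t`. For `z` near `0` the matrix `1 - z A` is invertible, and with
`x = (1 - z A)⁻¹ u` one has `(A + t u v*) x = z⁻¹ x` as soon as `z · v* x = w`. By the resolvent
identity `v* x = v* u + z G(z)`, where `G(z) = v* (1 - z A)⁻¹ A u` is analytic at `0` with
`G(0) = v* A u`. The map `z ↦ z (v* u + z G(z))` has derivative `v* u ≠ 0` at `0`, so the inverse
function theorem gives a solution `z = ψ(w) = O(w)`, and the eigenvalue `λ = 1 / ψ(w)` satisfies
`λ - (v* u) t = G(z) / (v* u + z G(z))`, which is `G(0) / (v* u) + O(z)`.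
-/
open Matrix Filter Asymptotics Topology

section
variable {K : Type*} [Field K] {n : Type*} [Fintype n] [DecidableEq n] {A : Matrix n n K} {z : K}

theorem Matrix.inv_one_sub_smul_eq (hA : IsUnit (1 - z • A).det) :
    (1 - z • A)⁻¹ = 1 + z • ((1 - z • A)⁻¹ * A) := by
  have h := nonsing_inv_mul _ hA
  rw [mul_sub, mul_one, mul_smul_comm] at h
  exact sub_eq_iff_eq_add.1 h

theorem Matrix.dotProduct_inv_one_sub_smul_mulVec (hA : IsUnit (1 - z • A).det) (u w : n → K) :
    w ⬝ᵥ (1 - z • A)⁻¹ *ᵥ u = w ⬝ᵥ u + z * (w ⬝ᵥ (1 - z • A)⁻¹ *ᵥ (A *ᵥ u)) := by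
  conv_lhs => rw [inv_one_sub_smul_eq hA]
  rw [add_mulVec, one_mulVec, smul_mulVec, ← mulVec_mulVec, dotProduct_add, dotProduct_smul,
    smul_eq_mul]

theorem Matrix.inv_mem_spectrum_add_smul_vecMulVec {u w : n → K} {t : K}
    (hA : IsUnit (1 - z • A).det) (h : z * (w ⬝ᵥ (1 - z • A)⁻¹ *ᵥ u) * t = 1) :
    z⁻¹ ∈ spectrum K (A + t • vecMulVec u w) := by
  set x := (1 - z • A)⁻¹ *ᵥ u
  have hz : z ≠ 0 := left_ne_zero_of_mul (left_ne_zero_of_mul_eq_one h)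
  have hx : x - z • A *ᵥ x = u := by
    have h1 : (1 - z • A) *ᵥ x = u := by rw [mulVec_mulVec, mul_nonsing_inv _ hA, one_mulVec]
    rwa [sub_mulVec, one_mulVec, smul_mulVec] at h1
  have hx0 : x ≠ 0 := fun h0 => by simp [h0] at h
  rw [← spectrum_toLin']
  refine Module.End.HasEigenvalue.mem_spectrum
    (Module.End.hasEigenvalue_of_hasEigenvector (x := x) ⟨Module.End.mem_eigenspace_iff.2 ?_, hx0⟩)
  have hAx : A *ᵥ x = z⁻¹ • (x - u) := by
    rw [← hx, sub_sub_cancel, smul_smul, inv_mul_cancel₀ hz, one_smul]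
  have htw : t * (w ⬝ᵥ x) = z⁻¹ := eq_inv_of_mul_eq_one_right (by rw [← h]; ring)
  rw [toLin'_apply, add_mulVec, smul_mulVec, vecMulVec_mulVec, op_smul_eq_smul, smul_smul, htw,
    hAx, smul_sub, sub_add_cancel]
end

theorem Matrix.eventually_isUnit_det_one_sub_smul {K : Type*} [Field K] [TopologicalSpace K]
    [IsTopologicalRing K] [T1Space K] {n : Type*} [Fintype n] [DecidableEq n] (A : Matrix n n K) :
    ∀ᶠ z in 𝓝 (0 : K), IsUnit (1 - z • A).det := by
  have hcont : Continuous fun z : K => (1 - z • A).det := by fun_prop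
  have h0 : (1 - (0 : K) • A).det ≠ 0 := by simp
  filter_upwards [hcont.continuousAt.eventually_ne h0] with z hz
  exact hz.isUnit

open scoped Matrix.Norms.L2Operator in
theorem Matrix.analyticAt_dotProduct_inv_one_sub_smul_mulVec {𝕜 : Type*} [RCLike 𝕜] {n : Type*}
    [Fintype n] [DecidableEq n] (A : Matrix n n 𝕜) (x y : n → 𝕜) :
    AnalyticAt 𝕜 (fun z : 𝕜 => y ⬝ᵥ (1 - z • A)⁻¹ *ᵥ x) 0 := by
  let ev : Matrix n n 𝕜 →ₗ[𝕜] 𝕜 :=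
    { toFun := fun M => y ⬝ᵥ M *ᵥ x
      map_add' := fun M N => by simp [add_mulVec, dotProduct_add]
      map_smul' := fun a M => by simp [smul_mulVec, dotProduct_smul] }
  have hinv := (spectrum.hasFPowerSeriesOnBall_inverse_one_sub_smul 𝕜 A).analyticAt
  simp only [← nonsing_inv_eq_ringInverse] at hinv
  exact (LinearMap.toContinuousLinearMap ev).analyticAt _ |>.comp hinv

section
variable {𝕜 : Type*} [NontriviallyNormedField 𝕜] [CompleteSpace 𝕜] {G : 𝕜 → 𝕜} {c : 𝕜}

theorem AnalyticAt.exists_rightInverse_mul_const_add_mul (hG : AnalyticAt 𝕜 G 0) (hc : c ≠ 0) :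
    ∃ ψ : 𝕜 → 𝕜, ψ 0 = 0 ∧ HasDerivAt ψ c⁻¹ 0 ∧
      ∀ᶠ w in 𝓝 0, ψ w * (c + ψ w * G (ψ w)) = w := by
  set H : 𝕜 → 𝕜 := fun z => z * (c + z * G z)
  have hH : HasStrictDerivAt H c 0 := by
    have hid := hasStrictDerivAt_id (0 : 𝕜)
    simpa using hid.fun_mul ((hasStrictDerivAt_const 0 c).fun_add (hid.fun_mul hG.hasStrictDerivAt))
  have hH0 : H 0 = 0 := by simp [H]
  refine ⟨hH.localInverse H c 0 hc, ?_, ?_, ?_⟩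
  · simpa [hH0] using (hH.hasStrictFDerivAt_equiv hc).localInverse_apply_image
  · simpa [hH0] using (hH.to_localInverse hc).hasDerivAt
  · simpa [hH0] using hH.eventually_right_inverse hc

theorem inv_sub_div_eq_div {K : Type*} [Field K] {z s c w : K} (h : z * (c + z * s) = w)
    (hw : w ≠ 0) : z⁻¹ - c / w = s / (c + z * s) := by
  have hz : z ≠ 0 := left_ne_zero_of_mul (h ▸ hw)
  have hzs : c + z * s ≠ 0 := right_ne_zero_of_mul (h ▸ hw)
  rw [← h]
  field_simp
  ring

theorem AnalyticAt.exists_rightInverse_mul_const_add_mul_isBigO (hG : AnalyticAt 𝕜 G 0)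
    (hc : c ≠ 0) :
    ∃ ψ : 𝕜 → 𝕜, Tendsto ψ (𝓝 0) (𝓝 0) ∧ (∀ᶠ w in 𝓝 0, ψ w * (c + ψ w * G (ψ w)) = w) ∧
      (fun w => (ψ w)⁻¹ - (c / w + G 0 / c)) =O[𝓝[≠] 0] fun w => w := by
  obtain ⟨ψ, hψ0, hψ', hψH⟩ := hG.exists_rightInverse_mul_const_add_mul hc
  set Φ : 𝕜 → 𝕜 := fun z => G z / (c + z * G z) - G 0 / c
  have hΦ : Φ =O[𝓝 0] fun z => z := by
    have hdiff : DifferentiableAt 𝕜 Φ 0 :=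
      (hG.differentiableAt.div (by fun_prop) (by simpa using hc)).sub_const _
    simpa [Φ, hc] using hdiff.isBigO_sub
  have hψO : ψ =O[𝓝 0] fun w => w := by simpa [hψ0] using hψ'.isBigO_sub
  have htend : Tendsto ψ (𝓝 0) (𝓝 0) := by
    simpa [hψ0] using hψ'.continuousAt.tendsto
  refine ⟨ψ, htend, hψH, ?_⟩
  have hΦψ : (fun w => (ψ w)⁻¹ - (c / w + G 0 / c)) =ᶠ[𝓝[≠] 0] Φ ∘ ψ := by
    filter_upwards [nhdsWithin_le_nhds hψH, self_mem_nhdsWithin] with w hw hw0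
    simp only [Function.comp_apply, Φ]
    rw [← inv_sub_div_eq_div hw hw0]
    ring
  exact hΦψ.trans_isBigO (((hΦ.comp_tendsto htend).trans hψO).mono nhdsWithin_le_nhds)

end

theorem stmt11 {n : ℕ} (A : Matrix (Fin n) (Fin n) ℂ) (u v : Fin n → ℂ)
    (huv : star v ⬝ᵥ u ≠ 0) :
    ∃ T : ℝ, 0 < T ∧ ∃ lam : ℝ → ℂ,
      (∀ t : ℝ, T ≤ t → lam t ∈ spectrum ℂ (A + (t : ℂ) • vecMulVec u (star v))) ∧
      (fun t : ℝ => lam t -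
          ((star v ⬝ᵥ u) * (t : ℂ) + (star v ⬝ᵥ A.mulVec u) / (star v ⬝ᵥ u)))
        =O[atTop] fun t : ℝ => 1 / t := by
  obtain ⟨ψ, hψ, hψH, hψO⟩ := (A.analyticAt_dotProduct_inv_one_sub_smul_mulVec (A *ᵥ u)
    (star v)).exists_rightInverse_mul_const_add_mul_isBigO huv
  have hinv : Tendsto (fun t : ℝ => (t : ℂ)⁻¹) atTop (𝓝[≠] 0) :=
    tendsto_inv₀_cobounded'.comp (RCLike.tendsto_ofReal_atTop_cobounded ℂ)
  have hspec : ∀ᶠ t : ℝ in atTop,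
      (ψ (t : ℂ)⁻¹)⁻¹ ∈ spectrum ℂ (A + (t : ℂ) • vecMulVec u (star v)) := by
    have hinv0 := hinv.mono_right nhdsWithin_le_nhds
    filter_upwards [hinv0.eventually (hψ.eventually A.eventually_isUnit_det_one_sub_smul),
      hinv0.eventually hψH, hinv.eventually self_mem_nhdsWithin]
      with t hdet hψt ht
    refine inv_mem_spectrum_add_smul_vecMulVec hdet ?_
    rw [dotProduct_inv_one_sub_smul_mulVec hdet, hψt]
    exact inv_mul_cancel₀ (by simpa using ht)
  obtain ⟨T, hT⟩ := eventually_atTop.1 hspec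
  refine ⟨max T 1, by positivity, fun t => (ψ (t : ℂ)⁻¹)⁻¹,
    fun t ht => hT t (le_of_max_le_left ht), ?_⟩
  have hinv_isBigO : (fun t : ℝ => (t : ℂ)⁻¹) =O[atTop] fun t : ℝ => 1 / t := .of_bound 1 <| by
    filter_upwards [eventually_ge_atTop 0] with t ht
    simp [abs_of_nonneg ht]
  simpa [Function.comp_def, div_inv_eq_mul] using (hψO.comp_tendsto hinv).trans hinv_isBigO
end

section
/- Let A be an n×n complex matrix, u, v ∈ ℂⁿ, let m_A be the minimal polynomial of A, and let p_{uv} be the polynomial satisfying p_{uv}(λ) = v* m_A(λ)(λIₙ − A)⁻¹u outside the spectrum of A. Suppose ζ is a root of p_{uv} of multiplicity exactly k ≥ 1 and m_A(ζ) ≠ 0. Then v*(ζIₙ − A)^{−(j+1)}u = 0 for j = 0, 1, …, k−1 and v*(ζIₙ − A)^{−(k+1)}u ≠ 0. -/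
/-!
Clearing denominators with the adjugate, `P := v* adj(X - A) u` is a polynomial equal to
`p_{uv} · (χ_A / m_A)`. Since `ζ - A` is invertible with inverse `B`, the truncated geometric
expansion of the resolvent around `ζ` becomes the polynomial congruence
`P ≡ χ_A · Σ_{j ≤ k} c_j (ζ - X)^j  mod (X - ζ)^(k+1)`, where `c_j = v* B^(j+1) u`.
As `χ_A(ζ) ≠ 0`, the multiplicity of `ζ` as a root of `P`, which is that of `p_{uv}`, is the
index of the first nonzero `c_j`.
-/

open Matrix Polynomial

theorem spectrum.notMem_of_eval_minpoly_ne_zero {𝕜 A : Type*} [Field 𝕜] [Ring A] [Algebra 𝕜 A]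
    {a : A} {ζ : 𝕜} (h : (minpoly 𝕜 a).eval ζ ≠ 0) : ζ ∉ spectrum 𝕜 a := fun hζ => by
  have := spectrum.subset_polynomial_aeval a (minpoly 𝕜 a) ⟨ζ, hζ, rfl⟩
  rw [minpoly.aeval, spectrum.mem_iff, sub_zero] at this
  exact this ((IsUnit.mk0 _ h).map (algebraMap 𝕜 A))

namespace Polynomial

variable {R : Type*} [CommRing R]

theorem X_sub_C_pow_dvd_sum_C_mul_pow_iff (g : ℕ → R) (ζ : R) {d m : ℕ} (hd : d ≤ m) :
    (X - C ζ) ^ d ∣ ∑ j ∈ Finset.range m, C (g j) * (C ζ - X) ^ j ↔ ∀ j < d, g j = 0 := by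
  rw [X_sub_C_pow_dvd_iff, X_pow_dvd_iff]
  refine forall₂_congr fun i hi => ?_
  have hcomp : (∑ j ∈ Finset.range m, C (g j) * (C ζ - X) ^ j).comp (X + C ζ) =
      ∑ j ∈ Finset.range m, C ((-1) ^ j * g j) * X ^ j := by
    simp only [sum_comp, mul_comp, C_comp, pow_comp, sub_comp, X_comp, C_mul, C_pow, C_neg, C_1]
    refine Finset.sum_congr rfl fun j _ => ?_
    ring
  simp only [hcomp, finsetSum_coeff, coeff_C_mul_X_pow, Finset.sum_ite_eq, Finset.mem_range,
    hi.trans_le hd, if_true]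
  exact (isUnit_neg_one.pow i).mul_right_eq_zero

variable [IsDomain R] {ζ : R}

theorem X_sub_C_pow_dvd_iff_of_dvd_sub_mul {P a G : R[X]} {d m : ℕ} (ha : a.eval ζ ≠ 0)
    (hd : d ≤ m) (h : (X - C ζ) ^ m ∣ P - a * G) :
    (X - C ζ) ^ d ∣ P ↔ (X - C ζ) ^ d ∣ G := by
  rw [dvd_iff_dvd_of_dvd_sub ((pow_dvd_pow _ hd).trans h)]
  exact ⟨(prime_X_sub_C ζ).pow_dvd_of_dvd_mul_left d (by rwa [dvd_iff_isRoot]),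
    fun hG => hG.mul_left a⟩

theorem rootMultiplicity_eq_iff_of_dvd_sub_mul_sum {P a : R[X]} {g : ℕ → R} {m : ℕ}
    (hP : P ≠ 0) (ha : a.eval ζ ≠ 0)
    (h : (X - C ζ) ^ (m + 1) ∣ P - a * ∑ j ∈ Finset.range (m + 1), C (g j) * (C ζ - X) ^ j) :
    P.rootMultiplicity ζ = m ↔ (∀ j < m, g j = 0) ∧ g m ≠ 0 := by
  have hle : ∀ d ≤ m + 1, d ≤ P.rootMultiplicity ζ ↔ ∀ j < d, g j = 0 := fun d hd => by
    rw [le_rootMultiplicity_iff hP, X_sub_C_pow_dvd_iff_of_dvd_sub_mul ha hd h,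
      X_sub_C_pow_dvd_sum_C_mul_pow_iff g ζ hd]
  rw [le_antisymm_iff, ← Nat.lt_add_one_iff, ← not_le, hle m m.le_succ, hle (m + 1) le_rfl,
    Nat.forall_lt_succ_right]
  tauto

end Polynomial

theorem RingHom.map_dotProduct_mulVec {R S m n : Type*} [NonAssocSemiring R]
    [NonAssocSemiring S] [Fintype m] [Fintype n] (f : R →+* S) (w : m → R) (M : Matrix m n R)
    (u : n → R) : f (w ⬝ᵥ M *ᵥ u) = (f ∘ w) ⬝ᵥ M.map f *ᵥ (f ∘ u) := by
  rw [f.map_dotProduct]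
  congr 1
  funext i
  exact f.map_mulVec M u i

namespace Matrix

variable {R n : Type*} [CommRing R] [Fintype n] [DecidableEq n]

theorem charmatrix_map_eval (A : Matrix n n R) (t : R) :
    (charmatrix A).map (eval t) = scalar n t - A := by
  ext i j
  by_cases h : i = j <;> simp [h]

theorem eval_dotProduct_adjugate_charmatrix_mulVec (A : Matrix n n R) (w u : n → R) (t : R) :
    ((C ∘ w) ⬝ᵥ adjugate (charmatrix A) *ᵥ (C ∘ u)).eval t =
      w ⬝ᵥ adjugate (scalar n t - A) *ᵥ u := by
  have hadj := (evalRingHom t).map_adjugate (charmatrix A)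
  simp only [RingHom.mapMatrix_apply, coe_evalRingHom] at hadj
  rw [← coe_evalRingHom, RingHom.map_dotProduct_mulVec]
  simp only [coe_evalRingHom]
  rw [hadj, charmatrix_map_eval]
  simp only [Function.comp_def, eval_C]

/-- `(X - A)⁻¹ = Σ_{j<m} (ζ - X)^j B^(j+1) + (ζ - X)^m (X - A)⁻¹ B^m` for `B = (ζ - A)⁻¹`,
multiplied through by `χ_A`. -/
theorem adjugate_charmatrix_eq_of_mul_eq_one {A B : Matrix n n R} {ζ : R}
    (hB : (scalar n ζ - A) * B = 1) (m : ℕ) :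
    adjugate (charmatrix A) =
      A.charpoly • (B.map C * ∑ j ∈ Finset.range m, ((C ζ - X) • B.map C) ^ j) +
        adjugate (charmatrix A) * ((C ζ - X) • B.map C) ^ m := by
  set S := (C ζ - X) • B.map C
  have hN : charmatrix A * B.map C = 1 - S := by
    have : charmatrix A = (scalar n ζ - A).map C - (C ζ - X) • 1 := by
      ext i j
      by_cases h : i = j <;> simp [h]
    rw [this, sub_mul, ← Matrix.map_mul, hB, Matrix.map_one _ C.map_zero C.map_one, smul_mul,
      one_mul]
  have hgeom : charmatrix A * (B.map C * ∑ j ∈ Finset.range m, S ^ j) = 1 - S ^ m := by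
    rw [← mul_assoc, hN, mul_neg_geom_sum]
  calc adjugate (charmatrix A)
      = adjugate (charmatrix A) *
          (charmatrix A * (B.map C * ∑ j ∈ Finset.range m, S ^ j) + S ^ m) := by
        rw [hgeom, sub_add_cancel, mul_one]
    _ = _ := by rw [mul_add, ← mul_assoc, adjugate_mul, smul_mul, one_mul]; rfl

theorem X_sub_C_pow_dvd_dotProduct_adjugate_charmatrix_mulVec_sub {A B : Matrix n n R} {ζ : R}
    (hB : (scalar n ζ - A) * B = 1) (w u : n → R) (m : ℕ) :
    (X - C ζ) ^ m ∣ (C ∘ w) ⬝ᵥ adjugate (charmatrix A) *ᵥ (C ∘ u) -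
      A.charpoly * ∑ j ∈ Finset.range m, C (w ⬝ᵥ B ^ (j + 1) *ᵥ u) * (C ζ - X) ^ j := by
  have hterm : ∀ j, (C ∘ w) ⬝ᵥ (B.map C * ((C ζ - X) • B.map C) ^ j) *ᵥ (C ∘ u) =
      C (w ⬝ᵥ B ^ (j + 1) *ᵥ u) * (C ζ - X) ^ j := fun j => by
    rw [_root_.smul_pow, mul_smul_comm, ← pow_succ', ← Matrix.map_pow, smul_mulVec,
      dotProduct_smul, smul_eq_mul, ← C.map_dotProduct_mulVec, mul_comm]
  rw [adjugate_charmatrix_eq_of_mul_eq_one hB m, add_mulVec, dotProduct_add, smul_mulVec,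
    dotProduct_smul, Finset.mul_sum, sum_mulVec, dotProduct_sum, smul_eq_mul]
  simp only [hterm, add_sub_cancel_left]
  rw [_root_.smul_pow, mul_smul_comm, smul_mulVec, dotProduct_smul, smul_eq_mul]
  exact (pow_dvd_pow_of_dvd (dvd_sub_comm.mp (dvd_refl (X - C ζ))) m).mul_right _

end Matrix

theorem stmt13 {n : ℕ} (A : Matrix (Fin n) (Fin n) ℂ) (u v : Fin n → ℂ)
    (p : Polynomial ℂ)
    (hp : ∀ lam ∉ spectrum ℂ A,
      p.eval lam = (minpoly ℂ A).eval lam *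
        (star v ⬝ᵥ (lam • (1 : Matrix (Fin n) (Fin n) ℂ) - A)⁻¹.mulVec u))
    (ζ : ℂ) (k : ℕ) (hk : 1 ≤ k)
    (hmult : p.rootMultiplicity ζ = k)
    (hm : (minpoly ℂ A).eval ζ ≠ 0) :
    (∀ j < k,
      star v ⬝ᵥ (((ζ • (1 : Matrix (Fin n) (Fin n) ℂ) - A)⁻¹) ^ (j + 1)).mulVec u = 0) ∧
    star v ⬝ᵥ (((ζ • (1 : Matrix (Fin n) (Fin n) ℂ) - A)⁻¹) ^ (k + 1)).mulVec u ≠ 0 := by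
  have hscalar (t : ℂ) : scalar (Fin n) t = t • (1 : Matrix (Fin n) (Fin n) ℂ) := by
    rw [scalar_apply, smul_one_eq_diagonal]
  have hunit (t : ℂ) (ht : t ∉ spectrum ℂ A) : IsUnit (scalar (Fin n) t - A).det := by
    rw [← isUnit_iff_isUnit_det, hscalar, ← Algebra.algebraMap_eq_smul_one]
    exact spectrum.notMem_iff.mp ht
  have hζ := hunit ζ (spectrum.notMem_of_eval_minpoly_ne_zero hm)
  have hχ : A.charpoly.eval ζ ≠ 0 := by
    rw [eval_charpoly]
    exact hζ.ne_zero
  obtain ⟨s, hs⟩ := A.minpoly_dvd_charpoly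
  -- both sides equal `χ_A(t) · v* (t - A)⁻¹ u` off the finite spectrum
  have hP : (C ∘ star v) ⬝ᵥ adjugate (charmatrix A) *ᵥ (C ∘ u) = p * s := by
    refine eq_of_infinite_eval_eq _ _ (A.finite_spectrum.infinite_compl.mono fun t ht => ?_)
    rw [Set.mem_ofPred_eq, eval_dotProduct_adjugate_charmatrix_mulVec, ← cramer_eq_adjugate_mulVec,
      ← det_smul_inv_mulVec_eq_cramer _ _ (hunit t ht), dotProduct_smul, smul_eq_mul, eval_mul,
      hp t ht, ← eval_charpoly, hs, eval_mul, hscalar]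
    ring
  have hs0 : ¬ s.IsRoot ζ := fun h => hχ (by rw [hs, eval_mul, h.eq_zero, mul_zero])
  have hp0 : p ≠ 0 := by
    rintro rfl
    rw [rootMultiplicity_zero] at hmult
    omega
  have hps : p * s ≠ 0 := mul_ne_zero hp0 fun h => hs0 (by simp [h])
  have hB : (scalar (Fin n) ζ - A) * (ζ • (1 : Matrix (Fin n) (Fin n) ℂ) - A)⁻¹ = 1 := by
    rw [hscalar]
    exact mul_nonsing_inv _ (hscalar ζ ▸ hζ)
  have hdvd := X_sub_C_pow_dvd_dotProduct_adjugate_charmatrix_mulVec_sub hB (star v) u (k + 1)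
  rw [hP] at hdvd
  refine (rootMultiplicity_eq_iff_of_dvd_sub_mul_sum hps hχ hdvd).mp ?_
  rw [rootMultiplicity_mul hps, hmult, rootMultiplicity_eq_zero hs0, add_zero]
end

section
/- Let A be an n×n complex matrix, u, v ∈ ℂⁿ, let m_A be the minimal polynomial of A, let p_{uv} be the polynomial satisfying p_{uv}(λ) = v* m_A(λ)(λIₙ − A)⁻¹u outside the spectrum of A, and suppose ζ is a root of p_{uv} of multiplicity exactly k ≥ 1 with m_A(ζ) ≠ 0. Write a_m = v*(ζIₙ − A)^{−m}u. Suppose λ : [T,∞) → ℂ is a function of real t ≥ T such that λ(t) is an eigenvalue of A + t u v* for every t ≥ T and λ(t) = ζ − b₁ t^{−1/k} − b₂ t^{−2/k} + o(t^{−2/k}) as t → ∞ with b₁ ≠ 0. Then b₁^{k} · a_{k+1} = 1 and b₂ = −(1/k) · b₁² a_{k+2} / a_{k+1}. -/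
open Matrix Filter Topology Finset

/-!
Put `s = t^(-1/k)` and `w = ζ - λ(t)`, so that `w = b₁ s + b₂ s² + o(s²)`. Since `ζ - A` is
invertible, expanding the resolvent around `ζ` gives
`v*(λ - A)⁻¹u = Σ_{m ≤ k+1} a_{m+1} w^m + O(w^{k+2})`, while `λ(t)` being an eigenvalue of the
rank-one perturbation `A + t u v*` forces `t · v*(λ - A)⁻¹u = 1` (matrix determinant lemma), so
the left side is exactly `s^k`. Comparing the two sides order by order in `w ~ b₁ s` gives
`a₁ = ⋯ = a_k = 0` and `b₁^k a_{k+1} = 1`, and the next order gives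
`a_{k+2} = -k b₂ a_{k+1} / b₁²`.
-/

section Expansion

variable {α 𝕜 : Type*} [NormedField 𝕜] {l : Filter α}

theorem tendsto_sub_sum_div_pow {E w ψ : α → 𝕜} {c : ℕ → 𝕜} {L : 𝕜} {N j : ℕ} (hj : j < N)
    (hw : Tendsto w l (𝓝 0)) (hw0 : ∀ᶠ x in l, w x ≠ 0) (hψ : Tendsto ψ l (𝓝 L))
    (hE : ∀ᶠ x in l, E x = ∑ m ∈ range N, c m * w x ^ m + w x ^ N * ψ x) :
    Tendsto (fun x => (E x - ∑ m ∈ range j, c m * w x ^ m) / w x ^ j) l (𝓝 (c j)) := by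
  obtain ⟨M, rfl⟩ : ∃ M, N = j + (M + 1) := ⟨N - j - 1, by omega⟩
  have hlim : Tendsto (fun x => ∑ i ∈ range M, c (j + (i + 1)) * w x ^ (i + 1) + c j
      + w x ^ (M + 1) * ψ x) l (𝓝 (c j)) := by
    simpa using ((tendsto_finsetSum _ fun i _ => (hw.pow (i + 1)).const_mul _).add_const
      (c j)).add ((hw.pow (M + 1)).mul hψ)
  refine hlim.congr' ?_
  filter_upwards [hE, hw0] with x hEx hwx
  have hshift : ∀ i, c (j + (i + 1)) * w x ^ (j + (i + 1))
      = w x ^ j * (c (j + (i + 1)) * w x ^ (i + 1)) := fun i => by ring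
  rw [hEx, sum_range_add, sum_range_succ']
  simp only [hshift, ← mul_sum, add_zero]
  rw [eq_div_iff (pow_ne_zero _ hwx)]
  ring

theorem tendsto_pow_sub_pow_div {q s : α → 𝕜} {β γ : 𝕜} (hq : Tendsto q l (𝓝 β))
    (hqs : Tendsto (fun x => (q x - β) / s x) l (𝓝 γ)) (k : ℕ) :
    Tendsto (fun x => (q x ^ k - β ^ k) / s x) l (𝓝 (k * β ^ (k - 1) * γ)) := by
  have hgeom : Tendsto (fun x => ∑ i ∈ range k, q x ^ i * β ^ (k - 1 - i)) l
      (𝓝 (k * β ^ (k - 1))) := by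
    convert tendsto_finsetSum (range k) fun i _ => (hq.pow i).mul_const (β ^ (k - 1 - i))
      using 2
    have hexp : ∀ i ∈ range k, β ^ i * β ^ (k - 1 - i) = β ^ (k - 1) := fun i hi => by
      rw [← pow_add]; congr 1; have := mem_range.mp hi; omega
    rw [sum_congr rfl hexp, sum_const, card_range, nsmul_eq_mul]
  refine (hgeom.mul hqs).congr fun x => ?_
  rw [← geom_sum₂_mul, mul_div_assoc]

theorem eventually_ne_zero_of_tendsto_div {w s : α → 𝕜} {b : 𝕜}
    (hq : Tendsto (fun x => w x / s x) l (𝓝 b)) (hb : b ≠ 0) :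
    ∀ᶠ x in l, w x ≠ 0 ∧ s x ≠ 0 := by
  filter_upwards [hq.eventually_ne hb] with x hx
  exact div_ne_zero_iff.mp hx

theorem tendsto_zero_of_tendsto_div {w s : α → 𝕜} {b : 𝕜} (hs : Tendsto s l (𝓝 0))
    (hq : Tendsto (fun x => w x / s x) l (𝓝 b)) (hb : b ≠ 0) : Tendsto w l (𝓝 0) := by
  refine (mul_zero b ▸ hq.mul hs).congr' ?_
  filter_upwards [eventually_ne_zero_of_tendsto_div hq hb] with x hx
  exact div_mul_cancel₀ _ hx.2

theorem tendsto_div_sub_div_of_isLittleO {s w : α → 𝕜} {b₁ b₂ : 𝕜}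
    (hs0 : ∀ᶠ x in l, s x ≠ 0)
    (h : (fun x => w x - (b₁ * s x + b₂ * s x ^ 2)) =o[l] fun x => s x ^ 2) :
    Tendsto (fun x => (w x / s x - b₁) / s x) l (𝓝 b₂) := by
  refine (zero_add b₂ ▸ h.tendsto_div_nhds_zero.add_const b₂).congr' ?_
  filter_upwards [hs0] with x hx
  field_simp
  ring

theorem tendsto_of_tendsto_sub_div {q s : α → 𝕜} {β γ : 𝕜} (hs : Tendsto s l (𝓝 0))
    (hs0 : ∀ᶠ x in l, s x ≠ 0) (h : Tendsto (fun x => (q x - β) / s x) l (𝓝 γ)) :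
    Tendsto q l (𝓝 β) := by
  have hlim := (hs.mul h).add_const β
  rw [zero_mul, zero_add] at hlim
  refine hlim.congr' ?_
  filter_upwards [hs0] with x hx
  rw [mul_div_cancel₀ _ hx, sub_add_cancel]

theorem coeff_eq_zero_of_lt_and_pow_mul_coeff_eq_one [l.NeBot] {s w ψ : α → 𝕜} {c : ℕ → 𝕜}
    {L b : 𝕜} {k N : ℕ} (hkN : k < N) (hs : Tendsto s l (𝓝 0))
    (hq : Tendsto (fun x => w x / s x) l (𝓝 b)) (hb : b ≠ 0) (hψ : Tendsto ψ l (𝓝 L))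
    (hE : ∀ᶠ x in l, s x ^ k = ∑ m ∈ range N, c m * w x ^ m + w x ^ N * ψ x) :
    (∀ j < k, c j = 0) ∧ b ^ k * c k = 1 := by
  have hne := eventually_ne_zero_of_tendsto_div hq hb
  have hw := tendsto_zero_of_tendsto_div hs hq hb
  have hlim : ∀ j ≤ k, Tendsto (fun x => s x ^ k / w x ^ j) l (𝓝 (0 ^ (k - j) * b⁻¹ ^ j)) := by
    intro j hj
    refine ((hs.pow (k - j)).mul ((hq.inv₀ hb).pow j)).congr' ?_
    filter_upwards [hne] with x hx
    rw [inv_div, div_pow, ← mul_div_assoc, ← pow_add, Nat.sub_add_cancel hj]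
  have hcoeff : ∀ j ≤ k, c j = 0 ^ (k - j) * b⁻¹ ^ j := by
    intro j
    induction j using Nat.strong_induction_on with
    | _ j ih =>
      intro hj
      have hlow : ∀ x, ∑ m ∈ range j, c m * w x ^ m = 0 := fun x =>
        sum_eq_zero fun m hm => by
          have hmk : k - m ≠ 0 := by have := mem_range.mp hm; omega
          rw [ih m (mem_range.mp hm) (by omega), zero_pow hmk, zero_mul, zero_mul]
      refine tendsto_nhds_unique ?_ (hlim j hj)
      simpa only [hlow, sub_zero] using
        tendsto_sub_sum_div_pow (E := fun x => s x ^ k) (j := j) (by omega) hw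
          (hne.mono fun x hx => hx.1) hψ hE
  refine ⟨fun j hj => by rw [hcoeff j hj.le, zero_pow (by omega), zero_mul], ?_⟩
  rw [hcoeff k le_rfl, Nat.sub_self, pow_zero, one_mul, ← mul_pow, mul_inv_cancel₀ hb, one_pow]

theorem pow_mul_coeff_eq_one_and_eq_coeff_succ_div [CharZero 𝕜] [l.NeBot] {s w ψ : α → 𝕜}
    {c : ℕ → 𝕜} {L b₁ b₂ : 𝕜} {k N : ℕ} (hk : k ≠ 0) (hkN : k + 1 < N) (hs : Tendsto s l (𝓝 0))
    (hq : Tendsto (fun x => w x / s x) l (𝓝 b₁)) (hb₁ : b₁ ≠ 0)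
    (hq' : Tendsto (fun x => (w x / s x - b₁) / s x) l (𝓝 b₂)) (hψ : Tendsto ψ l (𝓝 L))
    (hE : ∀ᶠ x in l, s x ^ k = ∑ m ∈ range N, c m * w x ^ m + w x ^ N * ψ x) :
    b₁ ^ k * c k = 1 ∧ b₂ = -(1 / (k : 𝕜)) * b₁ ^ 2 * c (k + 1) / c k := by
  obtain ⟨hlow, hlead⟩ := coeff_eq_zero_of_lt_and_pow_mul_coeff_eq_one (by omega) hs hq hb₁ hψ hE
  have hne := eventually_ne_zero_of_tendsto_div hq hb₁
  have hsum : ∀ x, ∑ m ∈ range (k + 1), c m * w x ^ m = c k * w x ^ k := fun x => by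
    rw [sum_range_succ, sum_eq_zero fun m hm => by rw [hlow m (mem_range.mp hm), zero_mul],
      zero_add]
  have hnext := tendsto_sub_sum_div_pow (E := fun x => s x ^ k) hkN
    (tendsto_zero_of_tendsto_div hs hq hb₁) (hne.mono fun x hx => hx.1) hψ hE
  simp only [hsum] at hnext
  have hnext' : Tendsto (fun x => (s x ^ k - c k * w x ^ k) / w x ^ (k + 1)) l
      (𝓝 (-c k * (k * b₁ ^ (k - 1) * b₂) * b₁⁻¹ ^ (k + 1))) := by
    refine (((tendsto_pow_sub_pow_div hq hq' k).const_mul (-c k)).mul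
      ((hq.inv₀ hb₁).pow (k + 1))).congr' ?_
    -- `s^k - c_k w^k = -c_k s^k ((w/s)^k - b₁^k)` because `b₁^k c_k = 1`
    filter_upwards [hne] with x ⟨hwx, hsx⟩
    rw [inv_div, div_pow, div_pow]
    field_simp
    linear_combination (s x ^ k * s x ^ (k + 1)) * hlead
  have hck := tendsto_nhds_unique hnext hnext'
  have hck0 : c k ≠ 0 := right_ne_zero_of_mul_eq_one hlead
  have hk' : (k : 𝕜) ≠ 0 := Nat.cast_ne_zero.mpr hk
  obtain ⟨j, rfl⟩ : ∃ j, k = j + 1 := ⟨k - 1, by omega⟩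
  refine ⟨hlead, ?_⟩
  rw [hck, Nat.add_sub_cancel, inv_pow]
  field_simp
  ring

end Expansion

theorem Complex.tendsto_ofReal_rpow_neg_one_div_atTop {k : ℕ} (hk : k ≠ 0) :
    Tendsto (fun t : ℝ => ((t ^ (-(1 : ℝ) / k) : ℝ) : ℂ)) atTop (𝓝 0) := by
  have h := tendsto_rpow_neg_atTop (y := 1 / k) (by positivity)
  simpa [neg_div, Function.comp_def] using (continuous_ofReal.tendsto 0).comp h

theorem Complex.ofReal_rpow_neg_one_div_pow {t : ℝ} (ht : 0 ≤ t) (x : ℝ) (j : ℕ) :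
    ((t ^ (-(1 : ℝ) / x) : ℝ) : ℂ) ^ j = ((t ^ (-(j : ℝ) / x) : ℝ) : ℂ) := by
  rw [← ofReal_pow, ← Real.rpow_mul_natCast ht]
  ring_nf

theorem Complex.eventually_mul_ofReal_rpow_neg_one_div_pow_eq_one {k : ℕ} (hk : k ≠ 0) :
    ∀ᶠ t : ℝ in atTop, (t : ℂ) * ((t ^ (-(1 : ℝ) / k) : ℝ) : ℂ) ^ k = 1 := by
  filter_upwards [eventually_gt_atTop 0] with t ht
  rw [ofReal_rpow_neg_one_div_pow ht.le, neg_div, div_self (by positivity), Real.rpow_neg_one,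
    ofReal_inv, mul_inv_cancel₀ (ofReal_ne_zero.mpr ht.ne')]

section Resolvent

variable {K ι : Type*} [Field K] [Fintype ι] [DecidableEq ι]

theorem Matrix.isUnit_smul_one_sub_of_minpoly_eval_ne_zero {A : Matrix ι ι K} {μ : K}
    (h : (minpoly K A).eval μ ≠ 0) : IsUnit (μ • (1 : Matrix ι ι K) - A) := by
  rw [← Algebra.algebraMap_eq_smul_one, ← spectrum.notMem_iff,
    ← AlgEquiv.spectrum_eq (toLinAlgEquiv' : Matrix ι ι K ≃ₐ[K] _),
    ← Module.End.hasEigenvalue_iff_mem_spectrum, Module.End.hasEigenvalue_iff_isRoot]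
  simpa [toLinAlgEquiv'_apply, minpoly_toLin'] using h

theorem Matrix.mul_dotProduct_eq_one_of_mem_spectrum_add_smul_vecMulVec
    {A : Matrix ι ι K} {u v : ι → K} {t μ : K} (hA : IsUnit (μ • (1 : Matrix ι ι K) - A))
    (hμ : μ ∈ spectrum K (A + t • vecMulVec u v)) :
    t * (v ⬝ᵥ (μ • (1 : Matrix ι ι K) - A)⁻¹ *ᵥ u) = 1 := by
  have hA' := (isUnit_iff_isUnit_det _).mp hA
  have hsplit : μ • (1 : Matrix ι ι K) - (A + t • vecMulVec u v)
      = (μ • 1 - A) + replicateCol Unit (-t • u) * replicateRow Unit v := by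
    rw [← vecMulVec_eq, neg_smul, neg_vecMulVec, smul_vecMulVec]; abel
  rw [spectrum.mem_iff, Algebra.algebraMap_eq_smul_one, isUnit_iff_isUnit_det,
    isUnit_iff_ne_zero, not_not, hsplit, det_add_replicateCol_mul_replicateRow hA',
    det_unique (1 + _), Matrix.mul_assoc, ← replicateCol_mulVec] at hμ
  simp only [hA'.ne_zero, false_or, mul_eq_zero, add_apply, one_apply_eq,
    replicateRow_mul_replicateCol_apply, mulVec_smul,
    dotProduct_smul, smul_eq_mul] at hμ
  linear_combination -hμ

theorem Matrix.inv_smul_one_sub_eq_add {A : Matrix ι ι K} {ζ μ : K}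
    (hζ : IsUnit (ζ • (1 : Matrix ι ι K) - A)) (hμ : IsUnit (μ • (1 : Matrix ι ι K) - A)) :
    (μ • (1 : Matrix ι ι K) - A)⁻¹
      = (ζ • (1 : Matrix ι ι K) - A)⁻¹ + (ζ - μ) • ((ζ • 1 - A)⁻¹ * (μ • 1 - A)⁻¹) := by
  have h := Matrix.inv_sub_inv (A := ζ • (1 : Matrix ι ι K) - A) (B := μ • 1 - A)
    (iff_of_true hζ hμ)
  rw [sub_sub_sub_cancel_right, ← sub_smul, Matrix.mul_smul, Matrix.mul_one, smul_mul_assoc]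
    at h
  rw [← neg_sub μ ζ, neg_smul, ← h]
  abel

theorem Matrix.inv_smul_one_sub_eq_sum_add {A : Matrix ι ι K} {ζ μ : K}
    (hζ : IsUnit (ζ • (1 : Matrix ι ι K) - A)) (hμ : IsUnit (μ • (1 : Matrix ι ι K) - A))
    (N : ℕ) :
    (μ • (1 : Matrix ι ι K) - A)⁻¹
      = ∑ m ∈ range N, (ζ - μ) ^ m • (ζ • (1 : Matrix ι ι K) - A)⁻¹ ^ (m + 1)
        + (ζ - μ) ^ N • ((ζ • 1 - A)⁻¹ ^ N * (μ • 1 - A)⁻¹) := by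
  induction N with
  | zero => simp
  | succ N ih =>
    conv_lhs => rw [ih, inv_smul_one_sub_eq_add hζ hμ]
    rw [sum_range_succ, Matrix.mul_add, mul_smul_comm, ← pow_succ, ← Matrix.mul_assoc,
      ← pow_succ, smul_add, smul_smul, ← pow_succ]
    abel

theorem Matrix.eventually_isUnit_smul_one_sub [TopologicalSpace K] [IsTopologicalRing K]
    [T1Space K] {α : Type*} {l : Filter α} {f : α → K} {A : Matrix ι ι K} {ζ : K}
    (hf : Tendsto f l (𝓝 ζ)) (hζ : IsUnit (ζ • (1 : Matrix ι ι K) - A)) :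
    ∀ᶠ x in l, IsUnit (f x • (1 : Matrix ι ι K) - A) := by
  have hcont : Continuous fun μ : K => (μ • (1 : Matrix ι ι K) - A).det :=
    ((continuous_id.smul continuous_const).sub continuous_const).matrix_det
  filter_upwards [(hcont.tendsto ζ |>.comp hf).eventually_ne
    ((isUnit_iff_isUnit_det _).mp hζ).ne_zero] with x hx
  exact (isUnit_iff_isUnit_det _).mpr hx.isUnit

theorem Matrix.tendsto_inv_smul_one_sub [TopologicalSpace K] [IsTopologicalDivisionRing K]
    {α : Type*} {l : Filter α} {f : α → K} {A : Matrix ι ι K} {ζ : K}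
    (hf : Tendsto f l (𝓝 ζ)) (hζ : IsUnit (ζ • (1 : Matrix ι ι K) - A)) :
    Tendsto (fun x => (f x • (1 : Matrix ι ι K) - A)⁻¹) l (𝓝 (ζ • 1 - A)⁻¹) := by
  have hinv : ContinuousAt Ring.inverse (ζ • (1 : Matrix ι ι K) - A).det := by
    rw [Ring.inverse_eq_inv']
    exact continuousAt_inv₀ ((isUnit_iff_isUnit_det _).mp hζ).ne_zero
  exact (continuousAt_matrix_inv _ hinv).tendsto.comp
    ((hf.smul_const 1).sub_const A)

theorem Matrix.dotProduct_inv_smul_one_sub_mulVec_eq_sum_add {A : Matrix ι ι K} {ζ μ : K}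
    (hζ : IsUnit (ζ • (1 : Matrix ι ι K) - A)) (hμ : IsUnit (μ • (1 : Matrix ι ι K) - A))
    (u v : ι → K) (N : ℕ) :
    v ⬝ᵥ (μ • (1 : Matrix ι ι K) - A)⁻¹ *ᵥ u
      = ∑ m ∈ range N, (v ⬝ᵥ (ζ • (1 : Matrix ι ι K) - A)⁻¹ ^ (m + 1) *ᵥ u) * (ζ - μ) ^ m
        + (ζ - μ) ^ N * (v ⬝ᵥ ((ζ • 1 - A)⁻¹ ^ N * (μ • 1 - A)⁻¹) *ᵥ u) := by
  conv_lhs => rw [inv_smul_one_sub_eq_sum_add hζ hμ N]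
  simp only [add_mulVec, sum_mulVec, smul_mulVec, dotProduct_add, dotProduct_sum,
    dotProduct_smul, smul_eq_mul]
  exact congrArg (· + _) (sum_congr rfl fun m _ => mul_comm _ _)

end Resolvent

theorem stmt14_general {n : ℕ} (A : Matrix (Fin n) (Fin n) ℂ) (u v : Fin n → ℂ)
    (ζ : ℂ) (k : ℕ) (hk : 1 ≤ k)
    (hm : (minpoly ℂ A).eval ζ ≠ 0)
    (a : ℕ → ℂ)
    (ha : ∀ m : ℕ,
      a m = star v ⬝ᵥ (((ζ • (1 : Matrix (Fin n) (Fin n) ℂ) - A)⁻¹) ^ m).mulVec u)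
    (T : ℝ) (lam : ℝ → ℂ) (b₁ b₂ : ℂ) (hb₁ : b₁ ≠ 0)
    (heig : ∀ t : ℝ, T ≤ t → lam t ∈ spectrum ℂ (A + (t : ℂ) • vecMulVec u (star v)))
    (hexp : (fun t : ℝ => lam t -
        (ζ - b₁ * ((t ^ (-(1 : ℝ) / k) : ℝ) : ℂ) - b₂ * ((t ^ (-(2 : ℝ) / k) : ℝ) : ℂ)))
      =o[atTop] fun t : ℝ => ((t ^ (-(2 : ℝ) / k) : ℝ) : ℂ)) :
    b₁ ^ k * a (k + 1) = 1 ∧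
    b₂ = -(1 / (k : ℂ)) * b₁ ^ 2 * a (k + 2) / a (k + 1) := by
  set s : ℝ → ℂ := fun t => ((t ^ (-(1 : ℝ) / k) : ℝ) : ℂ)
  set w : ℝ → ℂ := fun t => ζ - lam t
  have hk0 : k ≠ 0 := by omega
  have hs : Tendsto s atTop (𝓝 0) := Complex.tendsto_ofReal_rpow_neg_one_div_atTop hk0
  have hts := Complex.eventually_mul_ofReal_rpow_neg_one_div_pow_eq_one hk0
  have hs0 : ∀ᶠ t in atTop, s t ≠ 0 :=
    hts.mono fun t h => pow_ne_zero_iff hk0 |>.mp (right_ne_zero_of_mul_eq_one h)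
  have hs2 : ∀ᶠ t : ℝ in atTop, ((t ^ (-(2 : ℝ) / k) : ℝ) : ℂ) = s t ^ 2 :=
    (eventually_ge_atTop 0).mono fun t ht => (Complex.ofReal_rpow_neg_one_div_pow ht _ 2).symm
  have hq' : Tendsto (fun t => (w t / s t - b₁) / s t) atTop (𝓝 b₂) := by
    refine tendsto_div_sub_div_of_isLittleO hs0 (hexp.neg_left.congr' ?_ hs2)
    filter_upwards [hs2] with t ht
    rw [← ht]
    simp only [w, s]
    ring
  have hq := tendsto_of_tendsto_sub_div hs hs0 hq'
  have hlam : Tendsto lam atTop (𝓝 ζ) := by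
    simpa [w] using (tendsto_zero_of_tendsto_div hs hq hb₁).const_sub ζ
  have hζ := isUnit_smul_one_sub_of_minpoly_eval_ne_zero hm
  set R := (ζ • (1 : Matrix (Fin n) (Fin n) ℂ) - A)⁻¹
  have hψ : Tendsto (fun t => star v ⬝ᵥ (R ^ (k + 2) * (lam t • 1 - A)⁻¹) *ᵥ u) atTop
      (𝓝 (star v ⬝ᵥ (R ^ (k + 2) * R) *ᵥ u)) :=
    ((continuous_const.dotProduct ((continuous_const.matrix_mul continuous_id).matrix_mulVec
      continuous_const)).tendsto _).comp (tendsto_inv_smul_one_sub hlam hζ)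
  have hE : ∀ᶠ t in atTop, s t ^ k = ∑ m ∈ range (k + 2), a (m + 1) * w t ^ m
      + w t ^ (k + 2) * (star v ⬝ᵥ (R ^ (k + 2) * (lam t • 1 - A)⁻¹) *ᵥ u) := by
    filter_upwards [eventually_ge_atTop T, hts, eventually_isUnit_smul_one_sub hlam hζ]
      with t hT hst hU
    have hres := mul_dotProduct_eq_one_of_mem_spectrum_add_smul_vecMulVec hU (heig t hT)
    rw [← mul_left_cancel₀ (left_ne_zero_of_mul_eq_one hst) (hres.trans hst.symm),
      dotProduct_inv_smul_one_sub_mulVec_eq_sum_add hζ hU u (star v) (k + 2)]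
    simp only [ha, w, R]
  exact pow_mul_coeff_eq_one_and_eq_coeff_succ_div hk0 (by omega) hs hq hb₁ hq' hψ hE

theorem stmt14 {n : ℕ} (A : Matrix (Fin n) (Fin n) ℂ) (u v : Fin n → ℂ)
    (p : Polynomial ℂ)
    (hp : ∀ lam ∉ spectrum ℂ A,
      p.eval lam = (minpoly ℂ A).eval lam *
        (star v ⬝ᵥ (lam • (1 : Matrix (Fin n) (Fin n) ℂ) - A)⁻¹.mulVec u))
    (ζ : ℂ) (k : ℕ) (hk : 1 ≤ k)
    (hmult : p.rootMultiplicity ζ = k)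
    (hm : (minpoly ℂ A).eval ζ ≠ 0)
    (a : ℕ → ℂ)
    (ha : ∀ m : ℕ,
      a m = star v ⬝ᵥ (((ζ • (1 : Matrix (Fin n) (Fin n) ℂ) - A)⁻¹) ^ m).mulVec u)
    (T : ℝ) (lam : ℝ → ℂ) (b₁ b₂ : ℂ) (hb₁ : b₁ ≠ 0)
    (heig : ∀ t : ℝ, T ≤ t → lam t ∈ spectrum ℂ (A + (t : ℂ) • vecMulVec u (star v)))
    (hexp : (fun t : ℝ => lam t -
        (ζ - b₁ * ((t ^ (-(1 : ℝ) / k) : ℝ) : ℂ) - b₂ * ((t ^ (-(2 : ℝ) / k) : ℝ) : ℂ)))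
      =o[atTop] fun t : ℝ => ((t ^ (-(2 : ℝ) / k) : ℝ) : ℂ)) :
    b₁ ^ k * a (k + 1) = 1 ∧
    b₂ = -(1 / (k : ℂ)) * b₁ ^ 2 * a (k + 2) / a (k + 1) :=
  stmt14_general A u v ζ k hk hm a ha T lam b₁ b₂ hb₁ heig hexp
end
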